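/- arXiv:2603.11374 — 7 statements merged into one kernel-verified Lean document; each statement's English description precedes it below -/
import Mathlib

section
/- For any x ∈ ℝ^N with pairwise distinct coordinates, the sum over i from 1 to N of the product over j ≠ i of (x_i + 1 - x_j)/(x_i - x_j) equals N. -/
/-!
Both sides are the coefficient of `X ^ (N - 1)` in `P = ∏ j (X - x j + c) - ∏ j (X - x j)`,
a polynomial of degree `< N`: read off from the roots it is `N c`, and by Lagrange interpolation
at the nodes `x i`, where `P (x i) = c ∏_{j ≠ i} (x i + c - x j)`, it is `c` times the sum.
-/

open Polynomial Finset Lagrange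

section Nodal

variable {R : Type*} [CommRing R] {ι : Type*} {s : Finset ι}

theorem Lagrange.degree_nodal_sub_nodal_lt [Nontrivial R] (v w : ι → R) :
    (nodal s v - nodal s w).degree < #s := by
  rw [← degree_nodal (v := v)]
  exact degree_sub_lt_left (by rw [degree_nodal, degree_nodal]) nodal_ne_zero
    (by rw [nodal_monic.leadingCoeff, nodal_monic.leadingCoeff])

theorem Lagrange.coeff_nodal_sub_nodal (v w : ι → R) :
    (nodal s v - nodal s w).coeff (#s - 1) = ∑ i ∈ s, (w i - v i) := by
  rcases s.eq_empty_or_nonempty with rfl | hs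
  · simp
  rw [coeff_sub, nodal_eq, nodal_eq, prod_X_sub_C_coeff_card_pred s v hs.card_pos,
    prod_X_sub_C_coeff_card_pred s w hs.card_pos, sum_sub_distrib]
  ring

end Nodal

theorem Finset.sum_prod_erase_add_sub_div_sub {F : Type*} [Field F] {ι : Type*} [DecidableEq ι]
    {s : Finset ι} {x : ι → F} (hx : Set.InjOn x s) (c : F) :
    ∑ i ∈ s, ∏ j ∈ s.erase i, (x i + c - x j) / (x i - x j) = #s := by
  rcases eq_or_ne c 0 with rfl | hc
  · have hsub : ∀ i ∈ s, ∀ j ∈ s.erase i, x i - x j ≠ 0 := fun i hi j hj =>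
      sub_ne_zero.mpr fun h => (mem_erase.mp hj).1 (hx (mem_erase.mp hj).2 hi h.symm)
    simp_rw [add_zero]
    rw [sum_congr rfl fun i hi => prod_eq_one fun j hj => div_self (hsub i hi j hj)]
    simp
  have key := coeff_eq_sum hx (degree_nodal_sub_nodal_lt (fun j => x j - c) x)
  have heval : ∀ i ∈ s, (nodal s (fun j => x j - c) - nodal s x).eval (x i)
      = c * ∏ j ∈ s.erase i, (x i + c - x j) := by
    intro i hi
    rw [eval_sub, eval_nodal_at_node hi, sub_zero, eval_nodal, ← mul_prod_erase s _ hi]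
    congr 1
    · ring
    · exact prod_congr rfl fun j _ => by ring
  simp only [coeff_nodal_sub_nodal, sub_sub_cancel, sum_const, nsmul_eq_mul] at key
  rw [sum_congr rfl fun i hi => by rw [heval i hi, mul_div_assoc, ← prod_div_distrib],
    ← mul_sum, mul_comm] at key
  exact mul_left_cancel₀ hc key.symm

theorem stmt_0_general (N : ℕ) (x : Fin N → ℝ) (hx : Function.Injective x) :
    ∑ i : Fin N, ∏ j ∈ Finset.univ.erase i, (x i + 1 - x j) / (x i - x j) = N := by
  simpa using sum_prod_erase_add_sub_div_sub (s := univ) hx.injOn 1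

/-- For any `x ∈ ℝ^N` with pairwise distinct coordinates, the sum over `i` of the
product over `j ≠ i` of `(x i + 1 - x j)/(x i - x j)` equals `N`. -/
theorem stmt_0 (N : ℕ) (hN : 1 ≤ N) (x : Fin N → ℝ) (hx : Function.Injective x) :
    ∑ i : Fin N, ∏ j ∈ Finset.univ.erase i, (x i + 1 - x j) / (x i - x j) = N :=
  stmt_0_general N x hx
end

section
/- Let α, β ∈ ℤ^N be weakly decreasing integer vectors with β - α equal to a standard basis vector e_i (for some i, such that β is still weakly decreasing). Define d_γ = V(γ + ρ)/V(ρ) where V(x) = ∏_{1 ≤ i < j ≤ N} (x_i - x_j) and 2ρ = (N-1, N-3, …, -N+1). Then 1/N ≤ d_β/d_α ≤ N. -/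
/-!
Put `x = α + ρ`, so that `β + ρ = x + eᵢ` and `d_β / d_α = V(x + eᵢ) / V(x)`. Only the factors of
`V` involving the index `i` change, so the ratio is
`∏_{j < i} (1 - 1/(x_j - x_i)) * ∏_{k > i} (1 + 1/(x_i - x_k))`.
Since `ρ_j + j` is constant, `x_j - x_k ≥ k - j` for `j < k`, and likewise for `x + eᵢ`. Hence the
first product lies between `∏_{j < i} (1 - 1/(i - j + 1)) = 1/(i + 1)` and `1`, and the second
between `1` and `∏_{k > i} (1 + 1/(k - i)) = N - i`; both telescope.
-/

open Finset

theorem prod_range_one_add_inv (m : ℕ) :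
    ∏ n ∈ range m, (1 + 1 / ((n : ℝ) + 1)) = m + 1 := by
  induction m with
  | zero => simp
  | succ m ih =>
    rw [prod_range_succ, ih]
    push_cast
    field_simp

theorem prod_range_one_sub_inv (m : ℕ) :
    ∏ n ∈ range m, (1 - 1 / ((n : ℝ) + 2)) = 1 / (m + 1) := by
  induction m with
  | zero => simp
  | succ m ih =>
    rw [prod_range_succ, ih]
    push_cast
    field_simp
    ring

section Vandermonde

variable {ι M K : Type*} [Fintype ι] [LinearOrder ι]

theorem prod_filter_lt_ite_snd_eq [LocallyFiniteOrderBot ι] [CommMonoid M] (f : ι → M) (i : ι) :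
    ∏ p ∈ univ.filter (fun p : ι × ι => p.1 < p.2), (if p.2 = i then f p.1 else 1) =
      ∏ j ∈ Iio i, f j := by
  rw [prod_filter, Fintype.prod_prod_type, ← filter_gt_eq_Iio, prod_filter]
  simp_rw [← ite_and, and_comm (b := _ = i), ite_and, prod_ite_eq', mem_univ, if_true]

theorem prod_filter_lt_ite_fst_eq [LocallyFiniteOrderTop ι] [CommMonoid M] (f : ι → M) (i : ι) :
    ∏ p ∈ univ.filter (fun p : ι × ι => p.1 < p.2), (if p.1 = i then f p.2 else 1) =
      ∏ k ∈ Ioi i, f k := by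
  rw [prod_filter, Fintype.prod_prod_type, ← filter_lt_eq_Ioi, prod_filter]
  simp_rw [← ite_and, and_comm (b := _ = i), ite_and, prod_ite_irrel, prod_const_one,
    prod_ite_eq', mem_univ, if_true]

def vandermondeProd [CommRing K] (x : ι → K) : K :=
  ∏ p ∈ univ.filter (fun p : ι × ι => p.1 < p.2), (x p.1 - x p.2)

theorem vandermondeProd_pos [CommRing K] [LinearOrder K] [IsStrictOrderedRing K] {x : ι → K}
    (hx : StrictAnti x) : 0 < vandermondeProd x :=
  prod_pos fun _ hp => sub_pos.2 (hx (mem_filter.1 hp).2)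

theorem vandermondeProd_add_single_div [LocallyFiniteOrderBot ι] [LocallyFiniteOrderTop ι]
    [Field K] {x : ι → K} (hx : Function.Injective x) (i : ι) :
    vandermondeProd (x + Pi.single i 1) / vandermondeProd x =
      (∏ j ∈ Iio i, (1 - 1 / (x j - x i))) * ∏ k ∈ Ioi i, (1 + 1 / (x i - x k)) := by
  rw [vandermondeProd, vandermondeProd, ← prod_div_distrib, ← prod_filter_lt_ite_snd_eq,
    ← prod_filter_lt_ite_fst_eq, ← prod_mul_distrib]
  refine prod_congr rfl fun p hp => ?_
  have hlt := (mem_filter.1 hp).2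
  have hne : x p.1 - x p.2 ≠ 0 := sub_ne_zero.2 (hx.ne hlt.ne)
  by_cases h2 : p.2 = i
  · have h1 : p.1 ≠ i := h2 ▸ hlt.ne
    subst h2
    simp only [Pi.add_apply, Pi.single_eq_same, Pi.single_eq_of_ne h1, add_zero, ↓reduceIte,
      h1, mul_one]
    field_simp
    ring
  by_cases h1 : p.1 = i
  · subst h1
    simp only [Pi.add_apply, Pi.single_eq_same, Pi.single_eq_of_ne h2, add_zero, ↓reduceIte,
      h2, one_mul]
    field_simp
    ring
  · simp [h1, h2, hne]

end Vandermonde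

namespace Fin

variable {N : ℕ}

theorem prod_Ioi_one_add_inv (i : Fin N) :
    ∏ k ∈ Ioi i, (1 + 1 / ((k : ℕ) - (i : ℕ) : ℝ)) = N - i := by
  have h := prod_map (Ioi i) valEmbedding fun k : ℕ => 1 + 1 / ((k : ℝ) - (i : ℕ))
  simp only [valEmbedding_apply] at h
  rw [← h, map_valEmbedding_Ioi, ← Ico_add_one_left_eq_Ioo, prod_Ico_eq_prod_range]
  convert prod_range_one_add_inv (N - (i + 1)) using 2 with n
  · push_cast
    ring
  · rw [Nat.cast_sub i.isLt]
    push_cast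
    ring

theorem prod_Iio_one_sub_inv (i : Fin N) :
    ∏ j ∈ Iio i, (1 - 1 / ((i : ℕ) - (j : ℕ) + 1 : ℝ)) = 1 / ((i : ℕ) + 1) := by
  have h := prod_map (Iio i) valEmbedding fun j : ℕ => 1 - 1 / ((i : ℕ) - (j : ℝ) + 1)
  simp only [valEmbedding_apply] at h
  rw [← h, map_valEmbedding_Iio, Nat.Iio_eq_range, ← prod_range_reflect,
    ← prod_range_one_sub_inv]
  refine prod_congr rfl fun n hn => ?_
  have hn := mem_range.1 hn
  rw [Nat.cast_sub (by omega), Nat.cast_sub (by omega)]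
  push_cast
  ring

theorem one_le_natCast_sub_natCast {j k : Fin N} (hjk : j < k) : (1 : ℝ) ≤ (k : ℕ) - (j : ℕ) := by
  have : (j : ℕ) + 1 ≤ k := hjk
  rw [le_sub_iff_add_le']
  exact_mod_cast this

theorem natCast_sub_natCast_le_sub_of_antitone {x : Fin N → ℝ}
    (hx : Antitone fun j => x j + (j : ℕ))
    {j k : Fin N} (hjk : j ≤ k) : ((k : ℕ) - (j : ℕ) : ℝ) ≤ x j - x k := by
  have := hx hjk
  dsimp only at this
  linarith

theorem one_le_sub_of_antitone_add_natCast {x : Fin N → ℝ}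
    (hx : Antitone fun j => x j + (j : ℕ)) {j k : Fin N} (hjk : j < k) : 1 ≤ x j - x k :=
  (one_le_natCast_sub_natCast hjk).trans (natCast_sub_natCast_le_sub_of_antitone hx hjk.le)

theorem strictAnti_of_antitone_add_natCast {x : Fin N → ℝ}
    (hx : Antitone fun j => x j + (j : ℕ)) : StrictAnti x := fun _ _ hjk =>
  sub_pos.1 <| _root_.zero_lt_one.trans_le (one_le_sub_of_antitone_add_natCast hx hjk)

end Fin

section WeylDimension

variable {N : ℕ}

noncomputable def weylRho (N : ℕ) (j : Fin N) : ℝ := ((N : ℝ) - 1 - 2 * (j : ℕ)) / 2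

theorem antitone_intCast_add_weylRho_add_natCast {γ : Fin N → ℤ} (hγ : Antitone γ) :
    Antitone fun j => ((γ j : ℝ) + weylRho N j) + (j : ℕ) := by
  intro a b hab
  have : (γ b : ℝ) ≤ γ a := by exact_mod_cast hγ hab
  simp only [weylRho]
  linarith

theorem vandermondeProd_add_single_div_le {x : Fin N → ℝ} (hx : Antitone fun j => x j + (j : ℕ))
    (i : Fin N) : vandermondeProd (x + Pi.single i 1) / vandermondeProd x ≤ N - (i : ℕ) := by
  rw [vandermondeProd_add_single_div (Fin.strictAnti_of_antitone_add_natCast hx).injective]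
  have hU : ∀ j ∈ Iio i, 0 ≤ 1 - 1 / (x j - x i) ∧ 1 - 1 / (x j - x i) ≤ 1 := by
    intro j hj
    have hgap := Fin.one_le_sub_of_antitone_add_natCast hx (mem_Iio.1 hj)
    exact ⟨sub_nonneg.2 (div_le_one_of_le₀ hgap (by linarith)),
      sub_le_self _ (one_div_nonneg.2 (by linarith))⟩
  have hW : ∀ k ∈ Ioi i, 0 ≤ 1 + 1 / (x i - x k) ∧
      1 + 1 / (x i - x k) ≤ 1 + 1 / ((k : ℕ) - (i : ℕ) : ℝ) := by
    intro k hk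
    have hgap := Fin.natCast_sub_natCast_le_sub_of_antitone hx (mem_Ioi.1 hk).le
    have hik := Fin.one_le_natCast_sub_natCast (mem_Ioi.1 hk)
    constructor
    · have : 0 < x i - x k := by linarith
      positivity
    · gcongr
  calc _ ≤ 1 * ∏ k ∈ Ioi i, (1 + 1 / (x i - x k)) :=
        mul_le_mul_of_nonneg_right (prod_le_one (fun j hj => (hU j hj).1) fun j hj => (hU j hj).2)
          (prod_nonneg fun k hk => (hW k hk).1)
    _ ≤ ∏ k ∈ Ioi i, (1 + 1 / ((k : ℕ) - (i : ℕ) : ℝ)) := by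
        rw [one_mul]
        exact prod_le_prod (fun k hk => (hW k hk).1) fun k hk => (hW k hk).2
    _ = N - (i : ℕ) := Fin.prod_Ioi_one_add_inv i

theorem one_div_le_vandermondeProd_add_single_div {x : Fin N → ℝ} {i : Fin N}
    (hx : Antitone fun j => x j + (j : ℕ))
    (hy : Antitone fun j => (x + Pi.single i 1 : Fin N → ℝ) j + (j : ℕ)) :
    1 / ((i : ℕ) + 1 : ℝ) ≤ vandermondeProd (x + Pi.single i 1) / vandermondeProd x := by
  rw [vandermondeProd_add_single_div (Fin.strictAnti_of_antitone_add_natCast hx).injective]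
  have hU : ∀ j ∈ Iio i, 0 ≤ 1 - 1 / ((i : ℕ) - (j : ℕ) + 1 : ℝ) ∧
      1 - 1 / ((i : ℕ) - (j : ℕ) + 1 : ℝ) ≤ 1 - 1 / (x j - x i) := by
    intro j hj
    have hgap := Fin.natCast_sub_natCast_le_sub_of_antitone hy (mem_Iio.1 hj).le
    have hji := Fin.one_le_natCast_sub_natCast (mem_Iio.1 hj)
    simp only [Pi.add_apply, Pi.single_eq_same, Pi.single_eq_of_ne (mem_Iio.1 hj).ne] at hgap
    constructor
    · rw [sub_nonneg, div_le_one (by linarith)]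
      linarith
    · gcongr 1 - 1 / ?_
      linarith
  have hW : ∀ k ∈ Ioi i, 1 ≤ 1 + 1 / (x i - x k) := fun k hk =>
    le_add_of_nonneg_right <| one_div_nonneg.2 <|
      zero_le_one.trans (Fin.one_le_sub_of_antitone_add_natCast hx (mem_Ioi.1 hk))
  have hU_nonneg : 0 ≤ ∏ j ∈ Iio i, (1 - 1 / (x j - x i)) :=
    prod_nonneg fun j hj => (hU j hj).1.trans (hU j hj).2
  calc 1 / ((i : ℕ) + 1 : ℝ) = ∏ j ∈ Iio i, (1 - 1 / ((i : ℕ) - (j : ℕ) + 1 : ℝ)) :=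
        (Fin.prod_Iio_one_sub_inv i).symm
    _ ≤ ∏ j ∈ Iio i, (1 - 1 / (x j - x i)) :=
        prod_le_prod (fun j hj => (hU j hj).1) fun j hj => (hU j hj).2
    _ ≤ _ := le_mul_of_one_le_right hU_nonneg (one_le_prod hW)

end WeylDimension

theorem stmt_1_general (N : ℕ) (α β : Fin N → ℤ)
    (hα : ∀ i j : Fin N, i ≤ j → α j ≤ α i)
    (hβ : ∀ i j : Fin N, i ≤ j → β j ≤ β i)
    (hdiff : ∃ i : Fin N, β = α + fun j => if j = i then 1 else 0) :
    let ρ : Fin N → ℝ := fun i => ((N : ℝ) - 1 - 2 * (i : ℕ)) / 2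
    let V : (Fin N → ℝ) → ℝ := fun x =>
      ∏ p ∈ Finset.univ.filter (fun p : Fin N × Fin N => p.1 < p.2), (x p.1 - x p.2)
    let d : (Fin N → ℤ) → ℝ := fun γ => V (fun i => (γ i : ℝ) + ρ i) / V ρ
    1 / (N : ℝ) ≤ d β / d α ∧ d β / d α ≤ N := by
  intro ρ V d
  obtain ⟨i, hβα⟩ := hdiff
  set x : Fin N → ℝ := fun j => (α j : ℝ) + ρ j
  have hy : (fun j => (β j : ℝ) + ρ j) = x + Pi.single i 1 := by
    ext j
    simp only [x, hβα, Pi.add_apply, Pi.single_apply]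
    push_cast
    ring
  have hx_anti : Antitone fun j => x j + (j : ℕ) := antitone_intCast_add_weylRho_add_natCast hα
  have hy_anti : Antitone fun j => (x + Pi.single i 1 : Fin N → ℝ) j + (j : ℕ) := by
    rw [← hy]
    exact antitone_intCast_add_weylRho_add_natCast hβ
  have hρ_anti : Antitone fun j => ρ j + (j : ℕ) := by
    have h := antitone_intCast_add_weylRho_add_natCast (N := N) (γ := 0) antitone_const
    simp only [Pi.zero_apply, Int.cast_zero, zero_add] at h
    exact h
  have hd : d β / d α = vandermondeProd (x + Pi.single i 1) / vandermondeProd x := by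
    rw [← hy]
    exact div_div_div_cancel_right₀
      (vandermondeProd_pos (Fin.strictAnti_of_antitone_add_natCast hρ_anti)).ne' _ _
  have hiN : ((i : ℕ) + 1 : ℝ) ≤ N := by exact_mod_cast i.isLt
  rw [hd]
  constructor
  · calc 1 / (N : ℝ) ≤ 1 / ((i : ℕ) + 1) := one_div_le_one_div_of_le (by positivity) hiN
      _ ≤ _ := one_div_le_vandermondeProd_add_single_div hx_anti hy_anti
  · calc _ ≤ (N : ℝ) - (i : ℕ) := vandermondeProd_add_single_div_le hx_anti i
      _ ≤ N := sub_le_self _ (Nat.cast_nonneg _)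

/-- Pieri ratio bound: if `α, β` are weakly decreasing integer vectors with
`β - α` a standard basis vector, then `1/N ≤ d_β/d_α ≤ N`, where
`d_γ = V(γ+ρ)/V(ρ)` is the Weyl dimension. -/
theorem stmt_1 (N : ℕ) (hN : 1 ≤ N) (α β : Fin N → ℤ)
    (hα : ∀ i j : Fin N, i ≤ j → α j ≤ α i)
    (hβ : ∀ i j : Fin N, i ≤ j → β j ≤ β i)
    (hdiff : ∃ i : Fin N, β = α + fun j => if j = i then 1 else 0) :
    let ρ : Fin N → ℝ := fun i => ((N : ℝ) - 1 - 2 * (i : ℕ)) / 2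
    let V : (Fin N → ℝ) → ℝ := fun x =>
      ∏ p ∈ Finset.univ.filter (fun p : Fin N × Fin N => p.1 < p.2), (x p.1 - x p.2)
    let d : (Fin N → ℤ) → ℝ := fun γ => V (fun i => (γ i : ℝ) + ρ i) / V ρ
    1 / (N : ℝ) ≤ d β / d α ∧ d β / d α ≤ N :=
  stmt_1_general N α β hα hβ hdiff
end

section
/- For all integers N ≥ 3, real s ≥ 1, and α, β ∈ ℤ^N weakly decreasing such that α - β has at most s non-zero coefficients, one has |‖β+ρ‖² - ‖α+ρ‖²| / N ≤ (‖α+ρ‖² - ‖ρ‖²)/(2N) + (√s + 1)·‖β-α‖², where 2ρ = (N-1, N-3, …, -N+1) and ‖·‖ is the Euclidean norm on ℝ^N. -/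
set_option maxHeartbeats 1000000

/-- Casimir comparison bound: for `N ≥ 3`, `s ≥ 1`, and weakly decreasing integer
vectors `α, β ∈ ℤ^N` such that `α - β` has at most `s` non-zero coefficients,
`|‖β+ρ‖² - ‖α+ρ‖²|/N ≤ (‖α+ρ‖² - ‖ρ‖²)/(2N) + (√s + 1)·‖β-α‖²`. -/
theorem stmt_2 (N : ℕ) (hN : 3 ≤ N) (s : ℝ) (hs : 1 ≤ s) (α β : Fin N → ℤ)
    (hα : ∀ i j : Fin N, i ≤ j → α j ≤ α i)
    (hβ : ∀ i j : Fin N, i ≤ j → β j ≤ β i)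
    (hcard : ((Finset.univ.filter fun i : Fin N => α i ≠ β i).card : ℝ) ≤ s) :
    let ρ : Fin N → ℝ := fun i => ((N : ℝ) + 1 - 2 * ((i : ℕ) + 1)) / 2
    let nsq : (Fin N → ℝ) → ℝ := fun x => ∑ i, (x i) ^ 2
    |nsq (fun i => (β i : ℝ) + ρ i) - nsq (fun i => (α i : ℝ) + ρ i)| / N ≤
      (nsq (fun i => (α i : ℝ) + ρ i) - nsq ρ) / (2 * N)
        + (Real.sqrt s + 1) * nsq (fun i => (β i : ℝ) - (α i : ℝ)) := by
  intro ρ nsq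
  have hN1 : (1:ℝ) ≤ N := by exact_mod_cast (by omega : 1 ≤ N)
  have hNR : (3:ℝ) ≤ N := by exact_mod_cast hN
  have hN0 : (0:ℝ) < N := by linarith
  set a : Fin N → ℝ := fun i => (α i : ℝ) with ha
  set y : Fin N → ℝ := fun i => (β i : ℝ) - (α i : ℝ) with hy
  -- sum of ρ is zero
  have hρsum : ∑ i, ρ i = 0 := by
    have hgen : ∀ n : ℕ, ∑ i ∈ Finset.range n, (i : ℝ) = (n * (n - 1)) / 2 := by
      intro n
      induction n with
      | zero => simp
      | succ m ih =>
        rw [Finset.sum_range_succ, ih]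
        push_cast
        ring
    have h1 : ∑ i : Fin N, ((i : ℕ) : ℝ) = (N * (N - 1)) / 2 := by
      rw [Fin.sum_univ_eq_sum_range]
      exact hgen N
    have h2 : ∑ i : Fin N, ρ i = ∑ i : Fin N, ((((N:ℝ)+1)/2 - 1) - ((i:ℕ):ℝ)) := by
      apply Finset.sum_congr rfl
      intro i _
      simp only [ρ]
      ring
    rw [h2, Finset.sum_sub_distrib, Finset.sum_const, Finset.card_univ, Fintype.card_fin, h1,
      nsmul_eq_mul]
    ring
  -- inner product of a with rho nonneg (Chebyshev)
  have hmono : Monovary a ρ := by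
    intro i j hij
    have hji : (j:ℕ) < (i:ℕ) := by
      by_contra h
      push_neg at h
      have hr : ((i:ℕ):ℝ) ≤ ((j:ℕ):ℝ) := by exact_mod_cast h
      have : ρ j ≤ ρ i := by
        simp only [ρ]
        linarith
      linarith
    have hle : j ≤ i := Fin.le_def.mpr hji.le
    have : α i ≤ α j := hα j i hle
    show (α i : ℝ) ≤ (α j : ℝ)
    exact_mod_cast this
  have hch := hmono.sum_mul_sum_le_card_mul_sum
  have haρ : 0 ≤ ∑ i, a i * ρ i := by
    rw [hρsum, mul_zero, Fintype.card_fin] at hch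
    nlinarith [hch]
  -- expansion identities
  have hexp1 : nsq (fun i => (β i : ℝ) + ρ i) - nsq (fun i => (α i : ℝ) + ρ i)
      = nsq y + 2 * ∑ i, y i * (a i + ρ i) := by
    simp only [nsq, Finset.mul_sum, ← Finset.sum_add_distrib, ← Finset.sum_sub_distrib]
    apply Finset.sum_congr rfl
    intro i _
    simp only [y, a]
    ring
  have hexp2 : nsq (fun i => (α i : ℝ) + ρ i) - nsq ρ
      = nsq a + 2 * ∑ i, a i * ρ i := by
    simp only [nsq, Finset.mul_sum, ← Finset.sum_add_distrib, ← Finset.sum_sub_distrib]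
    apply Finset.sum_congr rfl
    intro i _
    simp only [a]
    ring
  have hynn : 0 ≤ nsq y := Finset.sum_nonneg fun i _ => sq_nonneg _
  have hann : 0 ≤ nsq a := Finset.sum_nonneg fun i _ => sq_nonneg _
  -- sqrt (nsq y) ≤ nsq y  (integrality)
  have hsqrty : Real.sqrt (nsq y) ≤ nsq y := by
    rcases eq_or_lt_of_le hynn with h | h
    · rw [← h]; simp
    · have h1 : (1:ℝ) ≤ nsq y := by
        have : nsq y = ((∑ i, (β i - α i)^2 : ℤ) : ℝ) := by
          simp only [nsq, y]
          push_cast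
          apply Finset.sum_congr rfl
          intro i _
          ring
        rw [this] at h ⊢
        have : (0:ℤ) < ∑ i, (β i - α i)^2 := by exact_mod_cast h
        exact_mod_cast this
      calc Real.sqrt (nsq y) ≤ Real.sqrt ((nsq y)^2) := Real.sqrt_le_sqrt (by nlinarith)
        _ = nsq y := Real.sqrt_sq hynn
  -- Cauchy-Schwarz: |∑ y a| ≤ sqrt(nsq y) sqrt(nsq a)
  have hCS : |∑ i, y i * a i| ≤ Real.sqrt (nsq y) * Real.sqrt (nsq a) := by
    rw [abs_le]
    have hpos := Real.sum_mul_le_sqrt_mul_sqrt Finset.univ y a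
    have hneg := Real.sum_mul_le_sqrt_mul_sqrt Finset.univ (fun i => -y i) a
    simp only [neg_mul, Finset.sum_neg_distrib, neg_sq] at hneg
    simp only [nsq]
    constructor
    · linarith [hneg]
    · exact hpos
  -- bound on |∑ y ρ|
  have hFsum : ∑ i, |y i| ≤ Real.sqrt s * Real.sqrt (nsq y) := by
    set F := Finset.univ.filter fun i : Fin N => α i ≠ β i with hF
    have h0 : ∑ i, |y i| = ∑ i ∈ F, |y i| := by
      rw [← Finset.sum_filter_add_sum_filter_not Finset.univ (fun i => α i ≠ β i)]
      have : ∑ i ∈ Finset.univ.filter (fun i => ¬ α i ≠ β i), |y i| = 0 := by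
        apply Finset.sum_eq_zero
        intro i hi
        simp only [Finset.mem_filter, not_not] at hi
        simp [y, hi.2]
      rw [this, add_zero]
    rw [h0]
    have h1 : (∑ i ∈ F, |y i|)^2 ≤ (F.card : ℝ) * ∑ i ∈ F, |y i|^2 :=
      sq_sum_le_card_mul_sum_sq
    have h2 : ∑ i ∈ F, |y i|^2 ≤ nsq y := by
      simp only [sq_abs]
      exact Finset.sum_le_sum_of_subset_of_nonneg (Finset.filter_subset _ _)
        (fun i _ _ => sq_nonneg _)
    have h3 : (∑ i ∈ F, |y i|)^2 ≤ s * nsq y := by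
      calc (∑ i ∈ F, |y i|)^2 ≤ (F.card : ℝ) * ∑ i ∈ F, |y i|^2 := h1
        _ ≤ s * nsq y := by
          apply mul_le_mul hcard h2 (Finset.sum_nonneg fun i _ => sq_nonneg _)
          linarith
    have h4 : 0 ≤ ∑ i ∈ F, |y i| := Finset.sum_nonneg fun i _ => abs_nonneg _
    calc ∑ i ∈ F, |y i| = Real.sqrt ((∑ i ∈ F, |y i|)^2) := by rw [Real.sqrt_sq h4]
      _ ≤ Real.sqrt (s * nsq y) := Real.sqrt_le_sqrt h3
      _ = Real.sqrt s * Real.sqrt (nsq y) := Real.sqrt_mul (by linarith) _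
  have hρbd : ∀ i : Fin N, |ρ i| ≤ (N:ℝ)/2 := by
    intro i
    simp only [ρ]
    rw [abs_div, abs_of_nonneg (by norm_num : (0:ℝ) ≤ 2)]
    apply div_le_div_of_nonneg_right ?_ (by norm_num)
    rw [abs_le]
    have h1 : (0:ℝ) ≤ ((i:ℕ):ℝ) := Nat.cast_nonneg _
    have h2 : ((i:ℕ):ℝ) + 1 ≤ N := by exact_mod_cast Nat.succ_le_of_lt i.2
    constructor <;> linarith
  have hyρ : |∑ i, y i * ρ i| ≤ ((N:ℝ)/2) * (Real.sqrt s * Real.sqrt (nsq y)) := by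
    calc |∑ i, y i * ρ i| ≤ ∑ i, |y i * ρ i| := Finset.abs_sum_le_sum_abs _ _
      _ ≤ ∑ i, |y i| * ((N:ℝ)/2) := by
        apply Finset.sum_le_sum
        intro i _
        rw [abs_mul]
        exact mul_le_mul_of_nonneg_left (hρbd i) (abs_nonneg _)
      _ = (∑ i, |y i|) * ((N:ℝ)/2) := by rw [← Finset.sum_mul]
      _ ≤ (Real.sqrt s * Real.sqrt (nsq y)) * ((N:ℝ)/2) := by
        apply mul_le_mul_of_nonneg_right hFsum (by linarith)
      _ = ((N:ℝ)/2) * (Real.sqrt s * Real.sqrt (nsq y)) := by ring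
  -- assemble
  have hs1 : (1:ℝ) ≤ Real.sqrt s := by
    rw [show (1:ℝ) = Real.sqrt 1 from (Real.sqrt_one).symm]
    exact Real.sqrt_le_sqrt hs
  have habs : |nsq (fun i => (β i : ℝ) + ρ i) - nsq (fun i => (α i : ℝ) + ρ i)|
      ≤ nsq y + 2 * |∑ i, y i * a i| + 2 * |∑ i, y i * ρ i| := by
    rw [hexp1]
    have h1 : ∑ i, y i * (a i + ρ i) = ∑ i, y i * a i + ∑ i, y i * ρ i := by
      rw [← Finset.sum_add_distrib]
      apply Finset.sum_congr rfl
      intro i _; ring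
    rw [h1]
    calc |nsq y + 2 * (∑ i, y i * a i + ∑ i, y i * ρ i)|
        ≤ |nsq y| + |2 * (∑ i, y i * a i + ∑ i, y i * ρ i)| := abs_add_le _ _
      _ ≤ nsq y + 2 * |∑ i, y i * a i| + 2 * |∑ i, y i * ρ i| := by
          rw [abs_of_nonneg hynn, abs_mul, abs_of_nonneg (by norm_num : (0:ℝ) ≤ 2)]
          have := abs_add_le (∑ i, y i * a i) (∑ i, y i * ρ i)
          nlinarith [abs_nonneg (∑ i, y i * a i)]
  -- 2 sqrt(nsq y) sqrt(nsq a) ≤ nsq a / 2 + 2 nsq y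
  have hamgm : 2 * (Real.sqrt (nsq y) * Real.sqrt (nsq a)) ≤ nsq a / 2 + 2 * nsq y := by
    have h1 := Real.sq_sqrt hynn
    have h2 := Real.sq_sqrt hann
    nlinarith [sq_nonneg (2 * Real.sqrt (nsq y) - Real.sqrt (nsq a))]
  -- sqrt s * sqrt (nsq y) ≤ sqrt s * nsq y
  have hsy : Real.sqrt s * Real.sqrt (nsq y) ≤ Real.sqrt s * nsq y :=
    mul_le_mul_of_nonneg_left hsqrty (by linarith)
  rw [div_le_iff₀ hN0, hexp2]
  have key : |nsq (fun i => (β i : ℝ) + ρ i) - nsq (fun i => (α i : ℝ) + ρ i)|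
      ≤ 3 * nsq y + nsq a / 2 + (N:ℝ) * (Real.sqrt s * nsq y) := by
    calc |nsq (fun i => (β i : ℝ) + ρ i) - nsq (fun i => (α i : ℝ) + ρ i)|
        ≤ nsq y + 2 * |∑ i, y i * a i| + 2 * |∑ i, y i * ρ i| := habs
      _ ≤ nsq y + (nsq a / 2 + 2 * nsq y) + (N:ℝ) * (Real.sqrt s * Real.sqrt (nsq y)) := by
          have h2CS := mul_le_mul_of_nonneg_left hCS (by norm_num : (0:ℝ) ≤ 2)
          have h2yρ := mul_le_mul_of_nonneg_left hyρ (by norm_num : (0:ℝ) ≤ 2)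
          linarith [hamgm]
      _ ≤ 3 * nsq y + nsq a / 2 + (N:ℝ) * (Real.sqrt s * nsq y) := by
          have := mul_le_mul_of_nonneg_left hsy (le_of_lt hN0)
          linarith
  have hfinal : ((nsq a + 2 * ∑ i, a i * ρ i) / (2 * N) + (Real.sqrt s + 1) * nsq y) * N
      = nsq a / 2 + (∑ i, a i * ρ i) + (N:ℝ) * ((Real.sqrt s + 1) * nsq y) := by
    field_simp
  rw [hfinal]
  have h3N : 3 * nsq y ≤ (N:ℝ) * nsq y := by nlinarith
  have hexpand : (N:ℝ) * ((Real.sqrt s + 1) * nsq y)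
      = (N:ℝ) * (Real.sqrt s * nsq y) + (N:ℝ) * nsq y := by ring
  linarith [key, haρ]
end

section
/- Let s > 0 and N ≥ 1. For each weakly decreasing integer vector α ∈ ℤ^N with min_i α_i = 0 (representative of ℤ^{↓N}/ℤ), let ω_l(α) = α_l - α_{l+1} for 1 ≤ l ≤ N-1. Then the Weyl dimension d_α = ∏_{1≤i<j≤N} (α_i - α_j + j - i)/(j - i) satisfies d_α ≥ ∏_{l=1}^{N-1} (1 + ω_l(α))^{v_l}, where v_l = ∑_{1 ≤ i ≤ l < j ≤ N} 1/(j-i). -/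
/-!
Each factor `(α_i - α_j + j - i)/(j - i)` of the Weyl product is the arithmetic mean of the
`j - i` numbers `1 + ω_l`, `i ≤ l < j`, since the gaps `ω_l` telescope to `α_i - α_j`. By AM–GM
it dominates their geometric mean `∏_{i ≤ l < j} (1 + ω_l)^{1/(j-i)}`; multiplying over all pairs
and collecting, for each `l`, the exponents of `1 + ω_l` gives exactly `v_l`.
-/

open Finset

theorem prod_one_add_sub_rpow_le {a : ℕ → ℝ} {i j : ℕ} (hij : i < j)
    (ha : ∀ l ∈ Ico i j, a (l + 1) ≤ a l) :
    ∏ l ∈ Ico i j, (1 + (a l - a (l + 1))) ^ (1 / ((j : ℝ) - i)) ≤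
      (a i - a j + j - i) / (j - i) := by
  have hlen : (0 : ℝ) < j - i := sub_pos.mpr (Nat.cast_lt.mpr hij)
  have hcard : ((Ico i j).card : ℝ) = j - i := by
    rw [Nat.card_Ico, Nat.cast_sub hij.le]
  have htelescope : ∑ l ∈ Ico i j, (a l - a (l + 1)) = a i - a j := by
    rw [← neg_sub (a j), ← sum_Ico_sub a hij.le, ← sum_neg_distrib]
    exact sum_congr rfl fun _ _ => (neg_sub _ _).symm
  calc ∏ l ∈ Ico i j, (1 + (a l - a (l + 1))) ^ (1 / ((j : ℝ) - i))
      ≤ ∑ l ∈ Ico i j, 1 / ((j : ℝ) - i) * (1 + (a l - a (l + 1))) :=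
        Real.geom_mean_le_arith_mean_weighted _ _ _ (fun _ _ => by positivity)
          (by rw [sum_const, nsmul_eq_mul, hcard]; field_simp)
          (fun l hl => by linarith [ha l hl])
    _ = (a i - a j + j - i) / (j - i) := by
        rw [← mul_sum, sum_add_distrib, sum_const, nsmul_eq_mul, hcard, htelescope]
        field_simp
        ring

theorem prod_Icc_prod_filter_comm {M : Type*} [CommMonoid M] (N : ℕ) (g : ℕ → ℕ × ℕ → M) :
    ∏ l ∈ Icc 1 (N - 1), ∏ p ∈ (Icc 1 N ×ˢ Icc 1 N).filter (fun p => p.1 ≤ l ∧ l < p.2), g l p =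
      ∏ p ∈ (Icc 1 N ×ˢ Icc 1 N).filter (fun p => p.1 < p.2), ∏ l ∈ Ico p.1 p.2, g l p := by
  refine prod_comm' fun l p => ?_
  simp only [mem_filter, mem_product, mem_Icc, mem_Ico]
  omega

theorem stmt_6_general (N : ℕ) (α : ℕ → ℤ)
    (hdec : ∀ i j : ℕ, 1 ≤ i → i ≤ j → j ≤ N → α j ≤ α i) :
    let pairs := (Finset.Icc 1 N ×ˢ Finset.Icc 1 N).filter fun p : ℕ × ℕ => p.1 < p.2
    let d : ℝ := ∏ p ∈ pairs, (((α p.1 : ℝ) - (α p.2 : ℝ) + (p.2 : ℝ) - (p.1 : ℝ)) /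
      ((p.2 : ℝ) - (p.1 : ℝ)))
    let v : ℕ → ℝ := fun l => ∑ p ∈ (Finset.Icc 1 N ×ˢ Finset.Icc 1 N).filter
      (fun p : ℕ × ℕ => p.1 ≤ l ∧ l < p.2), 1 / ((p.2 : ℝ) - (p.1 : ℝ))
    ∏ l ∈ Finset.Icc 1 (N - 1), (1 + ((α l : ℝ) - (α (l + 1) : ℝ))) ^ (v l) ≤ d := by
  intro pairs d v
  have hgap : ∀ l, 1 ≤ l → l < N → (α (l + 1) : ℝ) ≤ α l := fun l h1 h2 => by
    exact_mod_cast hdec l (l + 1) h1 l.le_succ h2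
  have hbase : ∀ l ∈ Icc 1 (N - 1), 0 < 1 + ((α l : ℝ) - α (l + 1)) := fun l hl => by
    rw [mem_Icc] at hl
    linarith [hgap l hl.1 (by omega)]
  have hgap_pairs : ∀ p ∈ pairs, ∀ l ∈ Ico p.1 p.2, (α (l + 1) : ℝ) ≤ α l := fun p hp l hl => by
    simp only [pairs, mem_filter, mem_product, mem_Icc] at hp
    rw [mem_Ico] at hl
    exact hgap l (by omega) (by omega)
  calc ∏ l ∈ Icc 1 (N - 1), (1 + ((α l : ℝ) - α (l + 1))) ^ (v l)
      = ∏ l ∈ Icc 1 (N - 1), ∏ p ∈ (Icc 1 N ×ˢ Icc 1 N).filter (fun p => p.1 ≤ l ∧ l < p.2),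
          (1 + ((α l : ℝ) - α (l + 1))) ^ (1 / ((p.2 : ℝ) - p.1)) :=
        prod_congr rfl fun l hl => Real.rpow_sum_of_pos (hbase l hl) _ _
    _ = ∏ p ∈ pairs, ∏ l ∈ Ico p.1 p.2,
          (1 + ((α l : ℝ) - α (l + 1))) ^ (1 / ((p.2 : ℝ) - p.1)) :=
        prod_Icc_prod_filter_comm N _
    _ ≤ d := prod_le_prod
        (fun p hp => prod_nonneg fun l hl =>
          Real.rpow_nonneg (by linarith [hgap_pairs p hp l hl]) _)
        (fun p hp => prod_one_add_sub_rpow_le (mem_filter.mp hp).2 (hgap_pairs p hp))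

/-- Lower bound on the Weyl dimension: for a weakly decreasing nonnegative integer
vector `α` (indexed `1,…,N`, with `α N = 0`), the Weyl dimension
`d_α = ∏_{1≤i<j≤N} (α_i - α_j + j - i)/(j-i)` satisfies
`d_α ≥ ∏_{l=1}^{N-1} (1 + ω_l)^{v_l}` where `ω_l = α_l - α_{l+1}` and
`v_l = ∑_{1 ≤ i ≤ l < j ≤ N} 1/(j-i)`. -/
theorem stmt_6 (N : ℕ) (hN : 1 ≤ N) (α : ℕ → ℤ)
    (hdec : ∀ i j : ℕ, 1 ≤ i → i ≤ j → j ≤ N → α j ≤ α i)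
    (hmin : α N = 0) :
    let pairs := (Finset.Icc 1 N ×ˢ Finset.Icc 1 N).filter fun p : ℕ × ℕ => p.1 < p.2
    let d : ℝ := ∏ p ∈ pairs, (((α p.1 : ℝ) - (α p.2 : ℝ) + (p.2 : ℝ) - (p.1 : ℝ)) /
      ((p.2 : ℝ) - (p.1 : ℝ)))
    let v : ℕ → ℝ := fun l => ∑ p ∈ (Finset.Icc 1 N ×ˢ Finset.Icc 1 N).filter
      (fun p : ℕ × ℕ => p.1 ≤ l ∧ l < p.2), 1 / ((p.2 : ℝ) - (p.1 : ℝ))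
    ∏ l ∈ Finset.Icc 1 (N - 1), (1 + ((α l : ℝ) - (α (l + 1) : ℝ))) ^ (v l) ≤ d :=
  stmt_6_general N α hdec
end

section
/- With v_l = ∑_{1 ≤ i ≤ l < j ≤ N} 1/(j-i) as above, one has v_l = v_{N-l} for all 1 ≤ l ≤ N-1, and v_l ≥ l, and v_l ≥ l·(log N - log l) for l ≤ N/2; in particular v_l ≥ l·max(1, log N - log l). -/
lemma filt (N k : ℕ) :
    ((Finset.Icc 1 N ×ˢ Finset.Icc 1 N).filter
      (fun p : ℕ × ℕ => p.1 ≤ k ∧ k < p.2)) = Finset.Icc 1 k ×ˢ Finset.Icc (k+1) N := by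
  ext ⟨i, j⟩
  simp [Finset.mem_filter, Finset.mem_product]
  omega

lemma symm1 (N l : ℕ) :
    ∑ p ∈ Finset.Icc 1 l ×ˢ Finset.Icc (l+1) N, 1 / ((p.2 : ℝ) - (p.1 : ℝ))
    = ∑ p ∈ Finset.Icc 1 (N-l) ×ˢ Finset.Icc (N-l+1) N, 1 / ((p.2 : ℝ) - (p.1 : ℝ)) := by
  apply Finset.sum_nbij' (i := fun p : ℕ × ℕ => (N+1-p.2, N+1-p.1))
    (j := fun p : ℕ × ℕ => (N+1-p.2, N+1-p.1))
  · intro ⟨a, b⟩ h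
    simp only [Finset.mem_product, Finset.mem_Icc] at *
    omega
  · intro ⟨a, b⟩ h
    simp only [Finset.mem_product, Finset.mem_Icc] at *
    omega
  · intro ⟨a, b⟩ h
    simp only [Finset.mem_product, Finset.mem_Icc] at *
    simp only [Prod.mk.injEq]
    omega
  · intro ⟨a, b⟩ h
    simp only [Finset.mem_product, Finset.mem_Icc] at *
    simp only [Prod.mk.injEq]
    omega
  · intro ⟨a, b⟩ h
    simp only [Finset.mem_product, Finset.mem_Icc] at h
    have h1 : a ≤ N + 1 := by omega
    have h2 : b ≤ N + 1 := by omega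
    simp only
    rw [Nat.cast_sub h2, Nat.cast_sub h1]
    push_cast
    ring_nf

lemma key_count (l : ℕ) :
    ∑ i ∈ Finset.Icc 1 l, ∑ d ∈ Finset.Icc (l+1-i) l, (1 / (d:ℝ)) = l := by
  have step1 : ∀ i ∈ Finset.Icc 1 l,
      ∑ d ∈ Finset.Icc (l+1-i) l, (1 / (d:ℝ))
        = ∑ d ∈ Finset.Icc 1 l, if l+1 ≤ i+d then (1 / (d:ℝ)) else 0 := by
    intro i hi
    simp only [Finset.mem_Icc] at hi
    rw [← Finset.sum_filter]
    congr 1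
    ext d
    simp only [Finset.mem_filter, Finset.mem_Icc]
    omega
  rw [Finset.sum_congr rfl step1, Finset.sum_comm]
  have step2 : ∀ d ∈ Finset.Icc 1 l,
      ∑ i ∈ Finset.Icc 1 l, (if l+1 ≤ i+d then (1 / (d:ℝ)) else 0) = 1 := by
    intro d hd
    simp only [Finset.mem_Icc] at hd
    rw [← Finset.sum_filter]
    have : (Finset.Icc 1 l).filter (fun i => l+1 ≤ i+d) = Finset.Icc (l+1-d) l := by
      ext i
      simp only [Finset.mem_filter, Finset.mem_Icc]
      omega
    rw [this, Finset.sum_const, Nat.card_Icc]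
    have hcard : l + 1 - (l + 1 - d) = d := by omega
    rw [hcard, nsmul_eq_mul]
    have : (d:ℝ) ≠ 0 := Nat.cast_ne_zero.mpr (by omega)
    field_simp
  rw [Finset.sum_congr rfl step2, Finset.sum_const, Nat.card_Icc]
  simp

lemma subst1 (l i : ℕ) (hi2 : i ≤ l) :
    ∑ j ∈ Finset.Icc (l+1) (l+i), 1 / ((j:ℝ) - (i:ℝ))
    = ∑ d ∈ Finset.Icc (l+1-i) l, (1 / (d:ℝ)) := by
  apply Finset.sum_nbij' (i := fun j => j - i) (j := fun d => d + i)
  · intro a ha; simp only [Finset.mem_Icc] at *; omega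
  · intro a ha; simp only [Finset.mem_Icc] at *; omega
  · intro a ha; simp only [Finset.mem_Icc] at *; omega
  · intro a ha; simp only [Finset.mem_Icc] at *; omega
  · intro a ha
    simp only [Finset.mem_Icc] at ha
    rw [Nat.cast_sub (by omega)]

lemma telescope (N l i : ℕ) (hlN : l ≤ N) :
    ∑ j ∈ Finset.Icc (l+1) N, (Real.log ((j:ℝ) + 1 - i) - Real.log ((j:ℝ) - i))
    = Real.log ((N:ℝ) + 1 - i) - Real.log ((l:ℝ) + 1 - i) := by
  set F : ℕ → ℝ := fun s => Real.log ((l:ℝ) + 1 + (s:ℕ) - i) with hF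
  have h1 : Finset.Icc (l+1) N = Finset.Ico (l+1) (N+1) := by
    rw [Finset.Ico_add_one_right_eq_Icc]
  rw [h1, Finset.sum_Ico_eq_sum_range]
  have h2 : N + 1 - (l + 1) = N - l := by omega
  rw [h2]
  have h3 : ∀ t ∈ Finset.range (N - l),
      (Real.log ((((l+1+t : ℕ)):ℝ) + 1 - i) - Real.log (((l+1+t : ℕ):ℝ) - i))
      = F (t+1) - F t := by
    intro t ht
    simp only [hF]
    push_cast
    ring_nf
  rw [Finset.sum_congr rfl h3, Finset.sum_range_sub F]
  simp only [hF]
  rw [Nat.cast_sub hlN]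
  push_cast
  ring_nf

lemma logterm (x : ℝ) (hx : 0 < x) : Real.log (x+1) - Real.log x ≤ 1/x := by
  have h := Real.log_le_sub_one_of_pos (show (0:ℝ) < (x+1)/x by positivity)
  rw [Real.log_div (by positivity) hx.ne'] at h
  have : (x+1)/x - 1 = 1/x := by field_simp; ring
  linarith

lemma ratio (N l i : ℕ) (hi1 : 1 ≤ i) (hil : i ≤ l) (h2l : 2*l ≤ N) (hl : 1 ≤ l) :
    Real.log N - Real.log l ≤ Real.log ((N:ℝ)+1-i) - Real.log ((l:ℝ)+1-i) := by
  have hiR : (1:ℝ) ≤ i := by exact_mod_cast hi1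
  have hilR : (i:ℝ) ≤ l := by exact_mod_cast hil
  have hlR : (1:ℝ) ≤ l := by exact_mod_cast hl
  have hNR : (2:ℝ) * l ≤ N := by exact_mod_cast h2l
  have hp1 : (0:ℝ) < (l:ℝ) + 1 - i := by linarith
  have hp2 : (0:ℝ) < (N:ℝ) + 1 - i := by linarith
  have hp3 : (0:ℝ) < N := by linarith
  have hp4 : (0:ℝ) < l := by linarith
  have key : (N:ℝ) * ((l:ℝ)+1-i) ≤ (l:ℝ) * ((N:ℝ)+1-i) := by nlinarith
  have := Real.log_le_log (by positivity) key
  rw [Real.log_mul hp3.ne' hp1.ne', Real.log_mul hp4.ne' hp2.ne'] at this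
  linarith

/-- Properties of the exponents `v_l = ∑_{1 ≤ i ≤ l < j ≤ N} 1/(j-i)`:
symmetry `v_l = v_{N-l}`, and for `l ≤ N/2` the lower bounds `v_l ≥ l`,
`v_l ≥ l(log N - log l)`, hence `v_l ≥ l·max(1, log N - log l)`. -/
theorem stmt_7 (N : ℕ) (hN : 2 ≤ N) (l : ℕ) (hl1 : 1 ≤ l) (hl2 : l ≤ N - 1) :
    let v : ℕ → ℝ := fun k => ∑ p ∈ (Finset.Icc 1 N ×ˢ Finset.Icc 1 N).filter
      (fun p : ℕ × ℕ => p.1 ≤ k ∧ k < p.2), 1 / ((p.2 : ℝ) - (p.1 : ℝ))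
    v l = v (N - l) ∧
      (2 * l ≤ N →
        (l : ℝ) ≤ v l ∧
        (l : ℝ) * (Real.log N - Real.log l) ≤ v l ∧
        (l : ℝ) * max 1 (Real.log N - Real.log l) ≤ v l) := by
  intro v
  have hvl : v l = ∑ i ∈ Finset.Icc 1 l, ∑ j ∈ Finset.Icc (l+1) N, 1/((j:ℝ)-(i:ℝ)) := by
    simp only [v]
    rw [filt, Finset.sum_product]
  constructor
  · simp only [v]
    rw [filt, filt]
    exact symm1 N l
  · intro h2l
    have hlN : l ≤ N := by omega
    have hb1 : (l : ℝ) ≤ v l := by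
      rw [hvl, ← key_count l]
      apply Finset.sum_le_sum
      intro i hi
      simp only [Finset.mem_Icc] at hi
      rw [← subst1 l i hi.2]
      apply Finset.sum_le_sum_of_subset_of_nonneg
      · intro j hj
        simp only [Finset.mem_Icc] at *
        omega
      · intro j hj _
        simp only [Finset.mem_Icc] at hj
        have : (i:ℝ) < j := by exact_mod_cast (by omega : i < j)
        exact le_of_lt (one_div_pos.mpr (by linarith))
    have hb2 : (l : ℝ) * (Real.log N - Real.log l) ≤ v l := by
      rw [hvl]
      have : (l : ℝ) * (Real.log N - Real.log l)
          = ∑ _i ∈ Finset.Icc 1 l, (Real.log N - Real.log l) := by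
        rw [Finset.sum_const, Nat.card_Icc, nsmul_eq_mul]
        norm_num
      rw [this]
      apply Finset.sum_le_sum
      intro i hi
      simp only [Finset.mem_Icc] at hi
      calc Real.log N - Real.log l
          ≤ Real.log ((N:ℝ)+1-i) - Real.log ((l:ℝ)+1-i) :=
            ratio N l i hi.1 hi.2 h2l hl1
        _ = ∑ j ∈ Finset.Icc (l+1) N,
              (Real.log ((j:ℝ) + 1 - i) - Real.log ((j:ℝ) - i)) :=
            (telescope N l i hlN).symm
        _ ≤ ∑ j ∈ Finset.Icc (l+1) N, 1/((j:ℝ)-(i:ℝ)) := by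
            apply Finset.sum_le_sum
            intro j hj
            simp only [Finset.mem_Icc] at hj
            have hx : (0:ℝ) < (j:ℝ) - i := by
              have : (i:ℝ) < j := by exact_mod_cast (by omega : i < j)
              linarith
            have e : (j:ℝ) + 1 - i = ((j:ℝ) - i) + 1 := by ring
            rw [e]
            exact logterm _ hx
    refine ⟨hb1, hb2, ?_⟩
    rcases le_total (Real.log N - Real.log l) 1 with h | h
    · rw [max_eq_left h, mul_one]
      exact hb1
    · rw [max_eq_right h]
      exact hb2
end

section
/- Let Ω_n^N = ∑_{σ ∈ S_n} N^{#σ} σ ∈ ℂ[S_n], where #σ is the number of cycles of σ. If T ∈ End(V^{⊗n}) commutes with the diagonal U(N)-action and T = ρ_N(κ_T) for some κ_T ∈ ℂ[S_n] (Schur–Weyl), then the moment element m_T = ∑_{σ∈S_n} Tr_{V^{⊗n}}(T ρ_N(σ^{-1})) σ satisfies m_T = Ω_n^N * κ_T (convolution in ℂ[S_n]). Consequently, if N ≥ n (so that Ω_n^N is invertible), κ_T = (Ω_n^N)^{-1} * m_T. -/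
/-!
With `T = ∑ κ(α) ρ(α)` and `ρ = ρ_N` multiplicative,
`Tr(T ρ(β⁻¹)) = ∑ κ(α) Tr ρ(αβ⁻¹)`, and `Tr ρ(αβ⁻¹) = Tr ρ(βα⁻¹)` because `ρ(σ⁻¹)` is the
transpose of the permutation matrix `ρ(σ)`; this is `m = Ω * κ` in the group algebra. Then
`W * m = (W * Ω) * κ = κ` by associativity of convolution.
-/

open Equiv Finset Matrix

section Convolution

variable {G R : Type*} [Group G] [Fintype G] [Semiring R]

/-- Multiplication in the group algebra `R[G]`, with elements written as coefficient functions. -/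
def groupConvolution (f g : G → R) : G → R := fun β => ∑ α, f (β * α⁻¹) * g α

theorem groupConvolution_assoc (f g h : G → R) :
    groupConvolution (groupConvolution f g) h = groupConvolution f (groupConvolution g h) := by
  funext β
  simp only [groupConvolution, sum_mul, mul_sum, mul_assoc]
  rw [sum_comm (f := fun δ α => f (β * δ⁻¹) * (g (δ * α⁻¹) * h α))]
  refine sum_congr rfl fun α _ => Fintype.sum_equiv (Equiv.mulRight α) _ _ fun γ => ?_
  simp [mul_assoc]

theorem single_one_groupConvolution [DecidableEq G] (h : G → R) :
    groupConvolution (Pi.single 1 1) h = h := by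
  funext β
  simp [groupConvolution, Pi.single_apply, mul_inv_eq_one]

end Convolution

section Moment

variable {G ι R : Type*} [Group G] [Fintype G] [Fintype ι] [DecidableEq ι] [CommSemiring R]

theorem trace_sum_smul_mul_map_inv (ρ : G →* Matrix ι ι R) (κ : G → R) (β : G) :
    trace ((∑ α, κ α • ρ α) * ρ β⁻¹) = ∑ α, κ α * trace (ρ (α * β⁻¹)) := by
  simp only [sum_mul, smul_mul, trace_sum, trace_smul, map_mul, smul_eq_mul]

theorem trace_sum_smul_mul_map_inv_eq_groupConvolution (ρ : G →* Matrix ι ι R)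
    (hρ : ∀ g, trace (ρ g⁻¹) = trace (ρ g)) (κ : G → R) :
    (fun β => trace ((∑ α, κ α • ρ α) * ρ β⁻¹)) = groupConvolution (fun g => trace (ρ g)) κ := by
  funext β
  rw [trace_sum_smul_mul_map_inv, groupConvolution]
  refine sum_congr rfl fun α _ => ?_
  rw [mul_comm, ← hρ, _root_.mul_inv_rev, inv_inv]

end Moment

section TensorPermutation

def tensorPermHom (ι α : Type*) : Perm ι →* Perm (ι → α) :=
  letI := arrowAction (G := Perm ι) (A := ι) (B := α)
  MulAction.toPermHom (Perm ι) (ι → α)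

theorem tensorPermHom_symm_apply {ι α : Type*} (σ : Perm ι) (f : ι → α) :
    (tensorPermHom ι α σ).symm f = f ∘ σ :=
  rfl

variable (ι α R : Type*) [DecidableEq ι] [DecidableEq α] [Fintype ι] [Fintype α]
  [NonAssocSemiring R]

/-- `ρ_N` in the product basis `e_f = e_{f 1} ⊗ ⋯ ⊗ e_{f n}`: it sends `e_f` to `e_{f ∘ σ⁻¹}`. -/
def tensorPermRep : Perm ι →* Matrix (ι → α) (ι → α) R :=
  (permMatrixHom (R := R)).comp (tensorPermHom ι α)

variable {ι α R}

theorem tensorPermRep_apply (σ : Perm ι) (g f : ι → α) :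
    tensorPermRep ι α R σ g f = if g = f ∘ ⇑σ⁻¹ then 1 else 0 := by
  simp [tensorPermRep, PEquiv.toMatrix_apply, tensorPermHom_symm_apply, Equiv.eq_comp_symm,
    eq_comm]

theorem trace_tensorPermRep_inv (σ : Perm ι) :
    trace (tensorPermRep ι α R σ⁻¹) = trace (tensorPermRep ι α R σ) := by
  rw [← trace_transpose]
  simp [tensorPermRep]

end TensorPermutation

theorem stmt_9_general (n N : ℕ)
    (M : Equiv.Perm (Fin n) → Matrix (Fin n → Fin N) (Fin n → Fin N) ℂ)
    (hM : ∀ σ g f, M σ g f = if g = f ∘ ⇑(σ⁻¹) then 1 else 0)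
    (T : Matrix (Fin n → Fin N) (Fin n → Fin N) ℂ)
    (κ : Equiv.Perm (Fin n) → ℂ)
    (hT : T = ∑ σ : Equiv.Perm (Fin n), κ σ • M σ) :
    let Ω : Equiv.Perm (Fin n) → ℂ := fun σ => (M σ).trace
    let m : Equiv.Perm (Fin n) → ℂ := fun σ => (T * M σ⁻¹).trace
    (∀ β : Equiv.Perm (Fin n), m β = ∑ α : Equiv.Perm (Fin n), Ω (β * α⁻¹) * κ α) ∧
    (∀ W : Equiv.Perm (Fin n) → ℂ,
      (∀ β : Equiv.Perm (Fin n),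
        (∑ α : Equiv.Perm (Fin n), W (β * α⁻¹) * Ω α) = if β = 1 then 1 else 0) →
      ∀ β : Equiv.Perm (Fin n), κ β = ∑ α : Equiv.Perm (Fin n), W (β * α⁻¹) * m α) := by
  intro Ω m
  obtain rfl : M = tensorPermRep (Fin n) (Fin N) ℂ :=
    funext fun σ => Matrix.ext fun g f => by rw [hM, tensorPermRep_apply]
  subst hT
  have hm : m = groupConvolution Ω κ :=
    trace_sum_smul_mul_map_inv_eq_groupConvolution _ trace_tensorPermRep_inv κ
  refine ⟨fun β => congrFun hm β, fun W hW β => ?_⟩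
  have hWΩ : groupConvolution W Ω = Pi.single 1 1 :=
    funext fun β => (hW β).trans (Pi.single_apply 1 1 β).symm
  show κ β = groupConvolution W m β
  rw [hm, ← groupConvolution_assoc, hWΩ, single_one_groupConvolution]

/-- Weingarten/moment convolution identity. Here `M σ` is the matrix of the
permutation action `ρ_N(σ)` of `S_n` on `(ℂ^N)^{⊗n}` in the standard product basis
(indexed by functions `Fin n → Fin N`), `Ω σ = Tr(ρ_N σ) (= N^{#σ})`, and for
`T = ρ_N(κ_T)` the moment element `m_T(σ) = Tr(T ρ_N(σ⁻¹))` satisfies the convolution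
identity `m_T = Ω * κ_T`; consequently, if `W` is a convolution inverse of `Ω`
(as exists for `N ≥ n`, the Weingarten function), then `κ_T = W * m_T`. -/
theorem stmt_9 (n N : ℕ) (hN : 1 ≤ N)
    (M : Equiv.Perm (Fin n) → Matrix (Fin n → Fin N) (Fin n → Fin N) ℂ)
    (hM : ∀ σ g f, M σ g f = if g = f ∘ ⇑(σ⁻¹) then 1 else 0)
    (T : Matrix (Fin n → Fin N) (Fin n → Fin N) ℂ)
    (κ : Equiv.Perm (Fin n) → ℂ)
    (hT : T = ∑ σ : Equiv.Perm (Fin n), κ σ • M σ) :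
    let Ω : Equiv.Perm (Fin n) → ℂ := fun σ => (M σ).trace
    let m : Equiv.Perm (Fin n) → ℂ := fun σ => (T * M σ⁻¹).trace
    (∀ β : Equiv.Perm (Fin n), m β = ∑ α : Equiv.Perm (Fin n), Ω (β * α⁻¹) * κ α) ∧
    (∀ W : Equiv.Perm (Fin n) → ℂ,
      (∀ β : Equiv.Perm (Fin n),
        (∑ α : Equiv.Perm (Fin n), W (β * α⁻¹) * Ω α) = if β = 1 then 1 else 0) →
      ∀ β : Equiv.Perm (Fin n), κ β = ∑ α : Equiv.Perm (Fin n), W (β * α⁻¹) * m α) :=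
  stmt_9_general n N M hM T κ hT
end

section
/- Let Γ_g = ⟨a_1, b_1, …, a_g, b_g | [a_1,b_1]⋯[a_g,b_g]⟩ be the surface group of genus g ≥ 1, with alphabet A of the 2g generators and their inverses. For letters x, y ∈ A define 𝔥𝔢(x,y) as the minimal length of a word w such that x^{-1} w y is a subword of a cyclic permutation of r̂ = [a_1, b_1^{-1}]⋯[a_g, b_g^{-1}]. If ω = x_0 x_1 ⋯ x_l is a subword of a cyclically shortest-length representative γ of a non-trivial element of Γ_g, then |ω| ≤ (2g−1)·∑_{k=0}^{l−1} 𝔥𝔢(x_k, x_{k+1}) + 2g. -/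
/-! Birman–Series bound for subwords of cyclically shortest representatives in a
surface group of genus `g`. Generators are indexed by `Fin g × Bool`
(`(i, false) = a_i`, `(i, true) = b_i`); a letter is a generator together with a
`Bool` (`true` = the generator, `false` = its inverse), as in `FreeGroup.mk`. -/

/-- A letter of the alphabet `A`: a generator or its formal inverse. -/
abbrev SurfLetter (g : ℕ) := (Fin g × Bool) × Bool

/-- The surface relator `r = [a_1,b_1]⋯[a_g,b_g]` as a word. -/
def surfaceRelator (g : ℕ) : List (SurfLetter g) :=
  (List.ofFn fun i : Fin g =>
    [((i, false), true), ((i, true), true), ((i, false), false), ((i, true), false)]).flatten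

/-- The word `r̂ = [a_1,b_1⁻¹]⋯[a_g,b_g⁻¹]`. -/
def hatRelator (g : ℕ) : List (SurfLetter g) :=
  (List.ofFn fun i : Fin g =>
    [((i, false), true), ((i, true), false), ((i, false), false), ((i, true), true)]).flatten

/-- The surface group `Γ_g`, presented by the single relator `r`. -/
def SurfaceGroup (g : ℕ) :=
  FreeGroup (Fin g × Bool) ⧸ Subgroup.normalClosure {FreeGroup.mk (surfaceRelator g)}

noncomputable instance (g : ℕ) : Group (SurfaceGroup g) :=
  inferInstanceAs (Group (FreeGroup (Fin g × Bool) ⧸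
    Subgroup.normalClosure {FreeGroup.mk (surfaceRelator g)}))

/-- The element of `Γ_g` represented by a word. -/
def toSurfaceGroup (g : ℕ) (w : List (SurfLetter g)) : SurfaceGroup g :=
  QuotientGroup.mk (FreeGroup.mk w)

/-- `w` is a subword of a cyclic permutation of `v`. -/
def IsCyclicSubword {α : Type*} (w v : List α) : Prop :=
  ∃ k : ℕ, w <:+: (v.drop k ++ v.take k)

/-- `𝔥𝔢(x,y)`: the minimal length of a word `w` such that `x⁻¹ w y` is a subword of a
cyclic permutation of `r̂`. -/
noncomputable def heDist (g : ℕ) (x y : SurfLetter g) : ℕ :=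
  sInf {k : ℕ | ∃ w : List (SurfLetter g), w.length = k ∧
    IsCyclicSubword ((x.1, !x.2) :: (w ++ [y])) (hatRelator g)}


namespace BS

def inv' {g : ℕ} (x : SurfLetter g) : SurfLetter g := (x.1, !x.2)

@[simp] lemma inv'_inv' {g : ℕ} (x : SurfLetter g) : inv' (inv' x) = x := by
  simp [inv']

def iota (n : ℕ) : ℕ := 4 * (n / 4) + (n % 4 + 2) % 4

def pi' (n : ℕ) : ℕ := 4 * (n / 4) + (4 - n % 4) % 4

lemma iota_iota (n : ℕ) : iota (iota n) = n := by unfold iota; omega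

lemma pi_pi (n : ℕ) : pi' (pi' n) = n := by unfold pi'; omega

lemma pi_succ (n : ℕ) : pi' (n + 1) = iota (pi' n) + 1 := by unfold pi' iota; omega

lemma iota_lt {g n : ℕ} (h : n < 4 * g) : iota n < 4 * g := by unfold iota; omega

lemma pi_lt {g n : ℕ} (h : n < 4 * g) : pi' n < 4 * g := by unfold pi'; omega

lemma iota_period (g n : ℕ) : iota (n + 4 * g) = iota n + 4 * g := by unfold iota; omega

lemma pi_period (g n : ℕ) : pi' (n + 4 * g) = pi' n + 4 * g := by unfold pi'; omega

variable {g : ℕ}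

def Fl (hg : 1 ≤ g) (n : ℕ) : SurfLetter g :=
  ((⟨n / 4 % g, Nat.mod_lt _ hg⟩, n % 2 == 1), (n % 4 == 0) || (n % 4 == 3))

lemma Fl_eqv (hg : 1 ≤ g) {m n : ℕ} (h4 : m % 4 = n % 4) (hq : m / 4 % g = n / 4 % g) :
    Fl hg m = Fl hg n := by
  have h2 : m % 2 = n % 2 := by omega
  unfold Fl
  simp only [h2, h4, hq]

lemma Fl_period (hg : 1 ≤ g) (n : ℕ) : Fl hg (n + 4 * g) = Fl hg n := by
  refine Fl_eqv hg (by omega) ?_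
  have : (n + 4 * g) / 4 = n / 4 + g := by omega
  rw [this, Nat.add_mod_right]

lemma Fl_mod (hg : 1 ≤ g) (n : ℕ) : Fl hg (n % (4 * g)) = Fl hg n := by
  induction n using Nat.strong_induction_on with
  | _ n ih =>
    rcases lt_or_ge n (4 * g) with h | h
    · rw [Nat.mod_eq_of_lt h]
    · have h1 : n = (n - 4 * g) + 4 * g := by omega
      rw [h1, Fl_period, Nat.add_mod_right]
      exact ih _ (by omega)

lemma Fl_cong (hg : 1 ≤ g) {m n : ℕ} (h : m % (4 * g) = n % (4 * g)) :
    Fl hg m = Fl hg n := by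
  rw [← Fl_mod hg m, ← Fl_mod hg n, h]

lemma pat_inj : ∀ s t : ℕ, s < 4 → t < 4 → ((s % 2 == 1) = (t % 2 == 1)) →
    (((s == 0) || (s == 3)) = ((t == 0) || (t == 3))) → s = t := by
  intro s t hs ht h1 h2
  interval_cases s <;> interval_cases t <;> simp_all

lemma Fl_inj (hg : 1 ≤ g) {m n : ℕ} (hm : m < 4 * g) (hn : n < 4 * g)
    (h : Fl hg m = Fl hg n) : m = n := by
  unfold Fl at h
  have h1 : m / 4 % g = n / 4 % g := congrArg (fun x : SurfLetter g => x.1.1.val) h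
  have h2 : (m % 2 == 1) = (n % 2 == 1) := congrArg (fun x : SurfLetter g => x.1.2) h
  have h3 : ((m % 4 == 0) || (m % 4 == 3)) = ((n % 4 == 0) || (n % 4 == 3)) :=
    congrArg (fun x : SurfLetter g => x.2) h
  have h2' : (m % 4 % 2 == 1) = (n % 4 % 2 == 1) := by
    have : m % 4 % 2 = m % 2 := by omega
    have : n % 4 % 2 = n % 2 := by omega
    simp_all
  have h4 : m % 4 = n % 4 := pat_inj _ _ (by omega) (by omega) h2' h3
  have h5 : m / 4 < g := by omega
  have h6 : n / 4 < g := by omega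
  rw [Nat.mod_eq_of_lt h5, Nat.mod_eq_of_lt h6] at h1
  omega

lemma bool_flip : ∀ s : ℕ, s < 4 → (!((s == 0) || (s == 3))) =
    (((s + 2) % 4 == 0) || ((s + 2) % 4 == 3)) := by
  intro s hs
  interval_cases s <;> decide

lemma inv_Fl (hg : 1 ≤ g) (n : ℕ) : inv' (Fl hg n) = Fl hg (iota n) := by
  unfold inv' Fl
  have e1 : iota n / 4 = n / 4 := by unfold iota; omega
  have e2 : iota n % 2 = n % 2 := by unfold iota; omega
  have e3 : iota n % 4 = (n % 4 + 2) % 4 := by unfold iota; omega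
  have e4 := bool_flip (n % 4) (by omega)
  simp only [e1, e2, e3]
  rw [← e4]
def Gl (hg : 1 ≤ g) (n : ℕ) : SurfLetter g := Fl hg (pi' n)

lemma Gl_period (hg : 1 ≤ g) (n : ℕ) : Gl hg (n + 4 * g) = Gl hg n := by
  unfold Gl; rw [pi_period, Fl_period]

def posOf {g : ℕ} (x : SurfLetter g) : ℕ :=
  4 * x.1.1.val + (match x.1.2, x.2 with
    | false, true => 0
    | true, false => 1
    | false, false => 2
    | true, true => 3)

lemma posOf_lt (x : SurfLetter g) : posOf x < 4 * g := by
  obtain ⟨⟨⟨i, hi⟩, b1⟩, b2⟩ := x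
  cases b1 <;> cases b2 <;> simp [posOf] <;> omega

lemma Fl_spec (hg : 1 ≤ g) (i : ℕ) (hi : i < g) (t : ℕ) (ht : t < 4) :
    Fl hg (4 * i + t) = ((⟨i, hi⟩, t % 2 == 1), (t == 0) || (t == 3)) := by
  unfold Fl
  have e1 : (4 * i + t) / 4 = i := by omega
  have e2 : (4 * i + t) % 4 = t := by omega
  have e3 : (4 * i + t) % 2 = t % 2 := by omega
  simp only [Prod.mk.injEq, Fin.mk.injEq, e1, e2, e3, Nat.mod_eq_of_lt hi]
  try exact ⟨⟨rfl, rfl⟩, rfl⟩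

lemma Fl_posOf (hg : 1 ≤ g) (x : SurfLetter g) : Fl hg (posOf x) = x := by
  obtain ⟨⟨⟨i, hi⟩, b1⟩, b2⟩ := x
  cases b1 <;> cases b2 <;> simp only [posOf] <;>
    rw [Fl_spec hg i hi _ (by norm_num)] <;> simp

/-- segment of the `c`-orbit -/
def seg {α : Type*} (c : ℕ → α) (j t : ℕ) : List α := (List.range' j t).map c

@[simp] lemma seg_length {α : Type*} (c : ℕ → α) (j t : ℕ) : (seg c j t).length = t := by
  simp [seg]

lemma getElem_seg {α : Type*} (c : ℕ → α) (j t i : ℕ) (h : i < (seg c j t).length) :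
    (seg c j t)[i] = c (j + i) := by
  simp [seg, List.getElem_range']

lemma seg_append {α : Type*} (c : ℕ → α) (j t1 t2 : ℕ) :
    seg c j (t1 + t2) = seg c j t1 ++ seg c (j + t1) t2 := by
  unfold seg
  rw [← List.map_append]
  congr 1
  have := @List.range'_append j t1 t2 1
  simpa [add_comm] using this.symm

lemma seg_cons {α : Type*} (c : ℕ → α) (j t : ℕ) :
    seg c j (t + 1) = c j :: seg c (j + 1) t := by
  have := seg_append c j 1 t
  simpa [seg, add_comm] using this

lemma seg_concat {α : Type*} (c : ℕ → α) (j t : ℕ) :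
    seg c j (t + 1) = seg c j t ++ [c (j + t)] := by
  have := seg_append c j t 1
  simpa [seg] using this

lemma seg_congr {α : Type*} {c1 c2 : ℕ → α} {j1 j2 t : ℕ}
    (h : ∀ s, s < t → c1 (j1 + s) = c2 (j2 + s)) : seg c1 j1 t = seg c2 j2 t := by
  apply List.ext_getElem (by simp)
  intro n h1 h2
  rw [getElem_seg, getElem_seg]
  exact h n (by simpa using h1)

/-- flatten of quadruple-blocks is a range'-map -/
lemma flatten_quads {α : Type*} (c : ℕ → α) :
    ∀ (L : List (List α)) (j : ℕ),
      (∀ (q : ℕ) (hq : q < L.length),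
        L[q] = [c (j + 4 * q), c (j + 4 * q + 1), c (j + 4 * q + 2), c (j + 4 * q + 3)]) →
      L.flatten = seg c j (4 * L.length)
  | [], j, _ => by simp [seg]
  | blk :: L', j, h => by
    have h0 := h 0 (by simp)
    simp only [List.getElem_cons_zero] at h0
    have hrest : ∀ (q : ℕ) (hq : q < L'.length),
        L'[q] = [c (j + 4 + 4 * q), c (j + 4 + 4 * q + 1), c (j + 4 + 4 * q + 2),
          c (j + 4 + 4 * q + 3)] := by
      intro q hq
      have := h (q + 1) (by simpa using Nat.succ_lt_succ hq)
      simp only [List.getElem_cons_succ] at this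
      rw [this]
      simp only [show j + 4 * (q + 1) = j + 4 + 4 * q from by ring,
        show j + 4 * (q + 1) + 1 = j + 4 + 4 * q + 1 from by ring,
        show j + 4 * (q + 1) + 2 = j + 4 + 4 * q + 2 from by ring,
        show j + 4 * (q + 1) + 3 = j + 4 + 4 * q + 3 from by ring]
    have ih := flatten_quads c L' (j + 4) hrest
    show blk ++ L'.flatten = _
    rw [h0, ih]
    have : 4 * (L'.length + 1) = 4 + 4 * L'.length := by ring
    rw [List.length_cons, this, seg_append c j 4 (4 * L'.length)]
    try congr 1
    try simp [seg, List.range']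
lemma hat_eq (hg : 1 ≤ g) : hatRelator g = seg (Fl hg) 0 (4 * g) := by
  unfold hatRelator
  have h := flatten_quads (Fl hg) (List.ofFn fun i : Fin g =>
    ([((i, false), true), ((i, true), false), ((i, false), false), ((i, true), true)] :
      List (SurfLetter g))) 0 ?_
  · rw [h, List.length_ofFn]
  · intro q hq
    have hq' : q < g := by simpa using hq
    rw [List.getElem_ofFn]
    rw [show (0 : ℕ) + 4 * q + 1 = 4 * q + 1 from by ring,
      show (0 : ℕ) + 4 * q + 2 = 4 * q + 2 from by ring,
      show (0 : ℕ) + 4 * q + 3 = 4 * q + 3 from by ring,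
      show (0 : ℕ) + 4 * q = 4 * q + 0 from by ring, Fl_spec hg q hq' 0 (by norm_num), Fl_spec hg q hq' 1 (by norm_num),
      Fl_spec hg q hq' 2 (by norm_num), Fl_spec hg q hq' 3 (by norm_num)]
    simp [Fin.cast]

lemma Gl_spec (hg : 1 ≤ g) (i : ℕ) (hi : i < g) (t : ℕ) (ht : t < 4) :
    Gl hg (4 * i + t) = Fl hg (4 * i + (4 - t) % 4) := by
  unfold Gl
  congr 1
  unfold pi'
  omega

lemma rel_eq (hg : 1 ≤ g) : surfaceRelator g = seg (Gl hg) 0 (4 * g) := by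
  unfold surfaceRelator
  have h := flatten_quads (Gl hg) (List.ofFn fun i : Fin g =>
    ([((i, false), true), ((i, true), true), ((i, false), false), ((i, true), false)] :
      List (SurfLetter g))) 0 ?_
  · rw [h, List.length_ofFn]
  · intro q hq
    have hq' : q < g := by simpa using hq
    rw [List.getElem_ofFn]
    rw [show (0 : ℕ) + 4 * q + 1 = 4 * q + 1 from by ring,
      show (0 : ℕ) + 4 * q + 2 = 4 * q + 2 from by ring,
      show (0 : ℕ) + 4 * q + 3 = 4 * q + 3 from by ring,
      show (0 : ℕ) + 4 * q = 4 * q + 0 from by ring, Gl_spec hg q hq' 0 (by norm_num), Gl_spec hg q hq' 1 (by norm_num),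
      Gl_spec hg q hq' 2 (by norm_num), Gl_spec hg q hq' 3 (by norm_num)]
    have f0 := Fl_spec hg q hq' 0 (by norm_num)
    have f1 := Fl_spec hg q hq' 1 (by norm_num)
    have f2 := Fl_spec hg q hq' 2 (by norm_num)
    have f3 := Fl_spec hg q hq' 3 (by norm_num)
    norm_num at f0 f1 f2 f3 ⊢
    rw [f0, f1, f2, f3]
    simp [Fin.cast]
lemma Qm_append (u v : List (SurfLetter g)) :
    toSurfaceGroup g (u ++ v) = toSurfaceGroup g u * toSurfaceGroup g v := by
  unfold toSurfaceGroup
  rw [← FreeGroup.mul_mk]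
  rfl

lemma Qm_invRev (w : List (SurfLetter g)) :
    toSurfaceGroup g (FreeGroup.invRev w) = (toSurfaceGroup g w)⁻¹ := by
  unfold toSurfaceGroup
  rw [← FreeGroup.inv_mk]
  rfl

lemma Qm_inv_single (x : SurfLetter g) :
    toSurfaceGroup g [inv' x] = (toSurfaceGroup g [x])⁻¹ := by
  rw [← Qm_invRev]
  congr 1
  try simp [FreeGroup.invRev, inv']

lemma Qm_rel_one : toSurfaceGroup g (surfaceRelator g) = 1 := by
  unfold toSurfaceGroup
  exact (QuotientGroup.eq_one_iff _).mpr (Subgroup.subset_normalClosure rfl)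

lemma relQ (hg : 1 ≤ g) (j : ℕ) : toSurfaceGroup g (seg (Gl hg) j (4 * g)) = 1 := by
  induction j using Nat.strong_induction_on with
  | _ j ih =>
    rcases lt_or_ge j (4 * g) with hj | hj
    · have hsplit := seg_append (Gl hg) 0 j (4 * g - j)
      rw [show j + (4 * g - j) = 4 * g from by omega, zero_add] at hsplit
      have hsplit2 := seg_append (Gl hg) j (4 * g - j) j
      rw [show (4 * g - j) + j = 4 * g from by omega] at hsplit2
      have hshift : seg (Gl hg) (j + (4 * g - j)) j = seg (Gl hg) 0 j := by
        apply seg_congr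
        intro s hs
        have : j + (4 * g - j) + s = (0 + s) + 4 * g := by omega
        rw [this, Gl_period]
      have h1 : toSurfaceGroup g (seg (Gl hg) 0 j) *
          toSurfaceGroup g (seg (Gl hg) j (4 * g - j)) = 1 := by
        rw [← Qm_append, ← hsplit, ← rel_eq hg]
        exact Qm_rel_one
      rw [hsplit2, hshift, Qm_append]
      have := inv_eq_of_mul_eq_one_right h1
      rw [← this]
      group
    · have hj' : j = (j - 4 * g) + 4 * g := by omega
      have : seg (Gl hg) j (4 * g) = seg (Gl hg) (j - 4 * g) (4 * g) := by
        apply seg_congr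
        intro s hs
        have e : j + s = (j - 4 * g + s) + 4 * g := by omega
        rw [e, Gl_period]
      rw [this]
      exact ih _ (by omega)
lemma delta_eq {n a b c : ℕ} (ha : a ≤ n) (hc : c < n) (h : b % n = (a + c) % n) :
    (b + n - a) % n = c := by
  have h1 : (b + n - a + a) % n = (c + a) % n := by
    rw [show b + n - a + a = b + n from by omega, Nat.add_mod_right, h, Nat.add_comm a c]
  have h2 := Nat.ModEq.add_right_cancel' a h1
  unfold Nat.ModEq at h2
  rw [h2, Nat.mod_eq_of_lt hc]

lemma pos_shift {n a b d : ℕ} (ha : a ≤ n) (h : (b + n - a) % n = d % n) :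
    b % n = (a + d) % n := by
  have h1 : Nat.ModEq n (b + n - a) d := h
  have h2 := h1.add_right a
  rw [show b + n - a + a = b + n from by omega] at h2
  have h3 : Nat.ModEq n b (b + n) := (Nat.add_mod_right b n).symm
  have h4 : Nat.ModEq n (d + a) (a + d) := by rw [Nat.add_comm]
  exact (h3.trans h2).trans h4

lemma delta_add {n a c : ℕ} (ha : a ≤ n) (hc : c < n) :
    ((a + c) % n + n - a) % n = c :=
  delta_eq ha hc (by rw [Nat.mod_mod_of_dvd _ (dvd_refl n)])

lemma Fl_eq_iff (hg : 1 ≤ g) {m n : ℕ} : Fl hg m = Fl hg n ↔ m % (4 * g) = n % (4 * g) := by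
  constructor
  · intro h
    refine Fl_inj hg (Nat.mod_lt _ (by omega)) (Nat.mod_lt _ (by omega)) ?_
    rw [Fl_mod, Fl_mod]
    exact h
  · exact Fl_cong hg

lemma seg_drop {α : Type*} (c : ℕ → α) (j t i : ℕ) :
    (seg c j t).drop i = seg c (j + i) (t - i) := by
  apply List.ext_getElem (by simp)
  intro n h1 h2
  rw [List.getElem_drop, getElem_seg, getElem_seg]
  congr 1
  omega

lemma seg_take {α : Type*} (c : ℕ → α) (j t i : ℕ) (h : i ≤ t) :
    (seg c j t).take i = seg c j i := by
  apply List.ext_getElem (by simp; omega)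
  intro n h1 h2
  rw [List.getElem_take, getElem_seg, getElem_seg]

lemma rot_hat (hg : 1 ≤ g) (j0 : ℕ) :
    (hatRelator g).drop j0 ++ (hatRelator g).take j0 = seg (Fl hg) (min j0 (4 * g)) (4 * g) := by
  rw [hat_eq hg]
  rcases le_or_gt (4 * g) j0 with h | h
  · rw [List.drop_eq_nil_of_le (by simpa using h), List.take_of_length_le (by simpa using h)]
    rw [min_eq_right h]
    refine (seg_congr fun s hs => ?_).symm
    have e : 4 * g + s = (0 + s) + 4 * g := by omega
    rw [e, Fl_period]
  · rw [min_eq_left h.le, seg_drop, seg_take _ _ _ _ h.le, zero_add]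
    have h2 : seg (Fl hg) 0 j0 = seg (Fl hg) (j0 + (4 * g - j0)) j0 := by
      refine seg_congr fun s hs => ?_
      have e : j0 + (4 * g - j0) + s = (0 + s) + 4 * g := by omega
      rw [e, Fl_period]
    rw [h2, ← seg_append]
    congr 1
    omega
lemma heDist_pair (hg : 1 ≤ g) {x y : SurfLetter g} (hxy : y ≠ inv' x) :
    heDist g x y + 1 = (posOf y + 4 * g - iota (posOf x)) % (4 * g) := by
  set a := iota (posOf x) with ha_def
  set b := posOf y with hb_def
  have hg4 : 0 < 4 * g := by omega
  have ha : a < 4 * g := iota_lt (posOf_lt x)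
  have hb : b < 4 * g := posOf_lt y
  set d := (b + 4 * g - a) % (4 * g) with hd_def
  have hdlt : d < 4 * g := Nat.mod_lt _ hg4
  have hinvx : (Fl hg a : SurfLetter g) = inv' x := by
    rw [ha_def, ← inv_Fl hg, Fl_posOf]
  have hy : (Fl hg b : SurfLetter g) = y := Fl_posOf hg y
  have hdpos : 0 < d := by
    rcases Nat.eq_zero_or_pos d with h0 | h
    · exfalso
      apply hxy
      have he : (b + 4 * g - a) % (4 * g) = 0 % (4 * g) := by
        rw [← hd_def, h0, Nat.zero_mod]
      have : b % (4 * g) = (a + 0) % (4 * g) := pos_shift ha.le he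
      have hFl : Fl hg b = Fl hg a := Fl_cong hg (by simpa using this)
      rw [← hy, hFl, hinvx]
    · exact h
  have hset : {k : ℕ | ∃ w : List (SurfLetter g), w.length = k ∧
      IsCyclicSubword ((x.1, !x.2) :: (w ++ [y])) (hatRelator g)} = {d - 1} := by
    ext k
    simp only [Set.mem_setOf_eq, Set.mem_singleton_iff]
    constructor
    · rintro ⟨w, hwl, j0, pre, suf, hps⟩
      rw [rot_hat hg] at hps
      set j := min j0 (4 * g) with hj_def
      set i := j + pre.length with hi_def
      have hW : ((x.1, !x.2) :: (w ++ [y]) : List (SurfLetter g)).length = k + 2 := by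
        simp [hwl]
      have hlen : pre.length + (k + 2) + suf.length = 4 * g := by
        have h' := congrArg List.length hps
        simp [hwl] at h'
        omega
      have hsA := seg_append (Fl hg) j pre.length (4 * g - pre.length)
      rw [show pre.length + (4 * g - pre.length) = 4 * g from by omega] at hsA
      rw [hsA, List.append_assoc] at hps
      have hrest := (List.append_inj hps (by simp)).2
      rw [← hi_def] at hrest
      have hsB := seg_append (Fl hg) i (k + 2) (4 * g - pre.length - (k + 2))
      rw [show k + 2 + (4 * g - pre.length - (k + 2)) = 4 * g - pre.length from by omega] at hsB
      rw [hsB] at hrest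
      have hWseg := (List.append_inj hrest (by simp [hW])).1
      rw [seg_cons] at hWseg
      have hhead : (x.1, !x.2) = Fl hg i := (List.cons_eq_cons.mp hWseg).1
      have htail : w ++ [y] = seg (Fl hg) (i + 1) (k + 1) := (List.cons_eq_cons.mp hWseg).2
      rw [seg_concat] at htail
      have hlast := (List.append_inj' htail (by simp)).2
      have hylast : y = Fl hg (i + 1 + k) := by simpa using hlast
      have hxi : a % (4 * g) = i % (4 * g) := by
        rw [← Fl_eq_iff hg, hinvx]
        exact hhead
      have hyi : b % (4 * g) = (i + 1 + k) % (4 * g) := by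
        rw [← Fl_eq_iff hg, hy, hylast]
      have hbk : b % (4 * g) = (a + (k + 1)) % (4 * g) := by
        rw [hyi]
        have h2 := (Nat.ModEq.symm (hxi : Nat.ModEq (4 * g) a i)).add_right (k + 1)
        rw [show i + (k + 1) = i + 1 + k from by omega] at h2
        exact h2.symm.trans (Nat.ModEq.refl _) |>.symm
      have hdk : d = k + 1 := by
        rw [hd_def]
        exact delta_eq ha.le (by omega) hbk
      omega
    · rintro rfl
      refine ⟨seg (Fl hg) (a + 1) (d - 1), by simp, a, [],
        seg (Fl hg) (a + (d + 1)) (4 * g - (d + 1)), ?_⟩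
      rw [rot_hat hg, min_eq_left ha.le]
      have e1 : seg (Fl hg) a (d + 1) =
          Fl hg a :: (seg (Fl hg) (a + 1) (d - 1) ++ [Fl hg (a + 1 + (d - 1))]) := by
        rw [show d + 1 = (d - 1 + 1) + 1 from by omega, seg_cons, seg_concat]
      have e2 : y = Fl hg (a + 1 + (d - 1)) := by
        rw [← hy]
        apply Fl_cong hg
        rw [show a + 1 + (d - 1) = a + d from by omega]
        exact pos_shift ha.le (by rw [hd_def, Nat.mod_mod_of_dvd _ (dvd_refl (4 * g))])
      have hWeq : ((x.1, !x.2) :: (seg (Fl hg) (a + 1) (d - 1) ++ [y]) : List (SurfLetter g)) =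
          seg (Fl hg) a (d + 1) := by
        rw [e1]
        exact congrArg₂ List.cons hinvx.symm (by rw [e2])
      rw [List.nil_append, hWeq]
      have hsC := seg_append (Fl hg) a (d + 1) (4 * g - (d + 1))
      rw [show (d + 1) + (4 * g - (d + 1)) = 4 * g from by omega] at hsC
      rw [hsC]
  unfold heDist
  rw [hset]
  have : sInf ({d - 1} : Set ℕ) = d - 1 := csInf_singleton _
  rw [this]
  omega
/-- the "gap" between consecutive positions in a position list -/
def dlt (g : ℕ) (P : List ℕ) (k : ℕ) : ℕ :=
  (P.getD (k + 1) 0 + 4 * g - iota (P.getD k 0)) % (4 * g)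

lemma iota_cases (n : ℕ) : (n % 4 < 2 ∧ iota n = n + 2) ∨ (2 ≤ n % 4 ∧ n ≥ 2 ∧ iota n = n - 2) := by
  unfold iota
  omega

lemma iota_cong {g : ℕ} {m n : ℕ} (h : m % (4 * g) = n % (4 * g)) :
    iota m % (4 * g) = iota n % (4 * g) := by
  have h4 : m % 4 = n % 4 := Nat.ModEq.of_dvd ⟨g, rfl⟩ h
  rcases iota_cases m with ⟨hm, em⟩ | ⟨hm, hm2, em⟩ <;>
    rcases iota_cases n with ⟨hn, en⟩ | ⟨hn, hn2, en⟩
  · rw [em, en]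
    exact Nat.ModEq.add_right 2 h
  · omega
  · omega
  · rw [em, en]
    have h2 : (m - 2) + 2 ≡ (n - 2) + 2 [MOD 4 * g] := by
      rw [show m - 2 + 2 = m from by omega, show n - 2 + 2 = n from by omega]
      exact h
    exact Nat.ModEq.add_right_cancel' 2 h2

lemma getD_drop (P : List ℕ) (i s : ℕ) : (P.drop i).getD s 0 = P.getD (i + s) 0 := by
  rcases lt_or_ge (i + s) P.length with h | h
  · rw [List.getD_eq_getElem _ _ (by simp; omega), List.getD_eq_getElem _ _ h, List.getElem_drop]
  · rw [List.getD_eq_default _ _ (by simp; omega), List.getD_eq_default _ _ (by omega)]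

lemma invRev_length (w : List (SurfLetter g)) : (FreeGroup.invRev w).length = w.length := by
  simp [FreeGroup.invRev]

/-- a position list with all gaps `1` maps onto a `Gl`-segment -/
lemma tau_seg (hg : 1 ≤ g) : ∀ (P : List ℕ) (j : ℕ), (∀ p ∈ P, p < 4 * g) →
    (∀ s, s + 1 < P.length → dlt g P s = 1) →
    (P ≠ [] → Gl hg j = Fl hg (P.getD 0 0)) →
    P.map (Fl hg) = seg (Gl hg) j P.length
  | [], j, _, _, _ => by simp [seg]
  | p :: P', j, hbd, hones, hhead => by
    have hh : Gl hg j = Fl hg p := by simpa using hhead (by simp)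
    rw [List.map_cons, List.length_cons, seg_cons, ← hh]
    congr 1
    apply tau_seg hg P' (j + 1) (fun q hq => hbd q (List.mem_cons_of_mem _ hq))
    · intro s hs
      have := hones (s + 1) (by simpa using Nat.succ_lt_succ hs)
      simpa [dlt] using this
    · intro hne
      have hlen : 0 + 1 < (p :: P').length := by
        cases P' with
        | nil => exact absurd rfl hne
        | cons q Q => simp
      have h1 := hones 0 hlen
      have hp : p < 4 * g := hbd p (by simp)
      have hb : P'.getD 0 0 < 4 * g := by
        cases P' with
        | nil => exact absurd rfl hne
        | cons q Q => exact hbd q (by simp)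
      have hioP : iota p < 4 * g := iota_lt hp
      have hmod : P'.getD 0 0 % (4 * g) = (iota p + 1) % (4 * g) := by
        apply pos_shift hioP.le
        rw [Nat.mod_eq_of_lt (by omega : (1 : ℕ) < 4 * g)]
        simpa [dlt] using h1
      have hGl : Gl hg (j + 1) = Fl hg (iota (pi' j) + 1) := by
        unfold Gl
        rw [pi_succ]
      rw [hGl]
      apply Fl_cong hg
      have hjp : pi' j % (4 * g) = p % (4 * g) := by
        rw [← Fl_eq_iff hg]
        exact hh
      have h2 : (iota (pi' j) + 1) % (4 * g) = (iota p + 1) % (4 * g) :=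
        Nat.ModEq.add_right 1 (iota_cong (g := g) hjp)
      rw [hmod, h2]
lemma chain_core (hg : 1 ≤ g) (M : ℕ) : ∀ (P : List ℕ), P ≠ [] →
    (∀ p ∈ P, p < 4 * g) →
    (∀ k, k + 1 < P.length → 1 ≤ dlt g P k) →
    (∀ j, j + 2 * g + 1 < P.length → ∃ s, s < 2 * g ∧ dlt g P (j + s) ≠ 1) →
    (∑ k ∈ Finset.range (P.length - 1), (dlt g P k - 1)) + 1 = M →
    ∃ w' : List (SurfLetter g), toSurfaceGroup g w' = toSurfaceGroup g (P.map (Fl hg)) ∧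
      w'.length + P.length = (4 * g - 2) * M + 2 := by
  induction M using Nat.strong_induction_on with
  | _ M ih =>
    intro P hne hbd hδ hinv hM
    classical
    have hg4 : 0 < 4 * g := by omega
    have hlenpos : 0 < P.length := List.length_pos_iff.mpr hne
    set l := P.length - 1 with hl_def
    by_cases hbase : ∀ k, k + 1 < P.length → dlt g P k = 1
    -- ===================== base case: a single bloc =====================
    · have hl2g : l ≤ 2 * g := by
        by_contra hcon
        push_neg at hcon
        obtain ⟨s, hs, hne1⟩ := hinv 0 (by omega)
        exact hne1 (hbase (0 + s) (by omega))
      have hsum0 : (∑ k ∈ Finset.range l, (dlt g P k - 1)) = 0 := by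
        apply Finset.sum_eq_zero
        intro k hk
        rw [Finset.mem_range] at hk
        rw [hbase k (by omega)]
        omega
      have hM1 : M = 1 := by omega
      set j0 := pi' (P.getD 0 0) with hj0_def
      have hGl0 : Gl hg j0 = Fl hg (P.getD 0 0) := by
        unfold Gl
        rw [hj0_def, pi_pi]
      have hseg := tau_seg hg P j0 hbd (fun s hs => hbase s hs) (fun _ => hGl0)
      have hlen4g : P.length ≤ 4 * g := by omega
      refine ⟨FreeGroup.invRev (seg (Gl hg) (j0 + P.length) (4 * g - P.length)), ?_, ?_⟩
      · rw [Qm_invRev]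
        have hsplit := seg_append (Gl hg) j0 P.length (4 * g - P.length)
        rw [show P.length + (4 * g - P.length) = 4 * g from by omega] at hsplit
        have h1 : toSurfaceGroup g (P.map (Fl hg)) *
            toSurfaceGroup g (seg (Gl hg) (j0 + P.length) (4 * g - P.length)) = 1 := by
          rw [hseg, ← Qm_append, ← hsplit]
          exact relQ hg j0
        exact (mul_eq_one_iff_eq_inv.mp h1).symm
      · rw [invRev_length, seg_length, hM1]
        omega
    -- ===================== peel case =====================
    · push_neg at hbase
      obtain ⟨k0, hk01, hk02⟩ := hbase
      set Q : ℕ → Prop := fun jj => jj + 1 < P.length ∧ dlt g P jj ≠ 1 with hQ_def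
      set k := Nat.findGreatest Q P.length with hk_def
      have hQk : Q k := Nat.findGreatest_spec (by omega : k0 ≤ P.length) ⟨hk01, hk02⟩
      have hkmax : ∀ jj, k < jj → jj + 1 < P.length → dlt g P jj = 1 := by
        intro jj h1 h2
        by_contra h3
        exact Nat.findGreatest_is_greatest h1 (by omega) ⟨h2, h3⟩
      obtain ⟨hk1, hd1⟩ := hQk
      set d := dlt g P k with hd_def
      have hdlt4 : d < 4 * g := Nat.mod_lt _ hg4
      have hd2 : 2 ≤ d := by
        have := hδ k hk1
        omega
      set t := l - 1 - k with ht_def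
      have hkl : k + 1 ≤ l := by omega
      have hlt : l = k + 1 + t := by omega
      have ht2g : t ≤ 2 * g := by
        by_contra hcon
        push_neg at hcon
        obtain ⟨s, hs, hne1⟩ := hinv (k + 1) (by omega)
        exact hne1 (hkmax (k + 1 + s) (by omega) (by omega))
      set pk := P.getD k 0 with hpk_def
      set pk1 := P.getD (k + 1) 0 with hpk1_def
      have hpk4 : pk < 4 * g := by
        rw [hpk_def, List.getD_eq_getElem _ _ (by omega)]
        exact hbd _ (List.getElem_mem _)
      have hpk14 : pk1 < 4 * g := by
        rw [hpk1_def, List.getD_eq_getElem _ _ (by omega)]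
        exact hbd _ (List.getElem_mem _)
      set a := iota pk with ha_def
      have ha4 : a < 4 * g := iota_lt hpk4
      set pz := (a + (d - 1)) % (4 * g) with hpz_def
      have hpz4 : pz < 4 * g := Nat.mod_lt _ hg4
      have hdcomp : (pk1 + 4 * g - a) % (4 * g) = d := by
        rw [hd_def, hpk1_def, ha_def, hpk_def]
        rfl
      set P' := P.take (k + 1) ++ [pz] with hP'_def
      have hP'len : P'.length = k + 2 := by
        rw [hP'_def, List.length_append, List.length_take]
        simp
        omega
      have hTlen : (P.take (k + 1)).length = k + 1 := by
        rw [List.length_take]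
        omega
      have hPg : ∀ j, j ≤ k → P'.getD j 0 = P.getD j 0 := by
        intro j hj
        rw [hP'_def, List.getD_append _ _ _ _ (by rw [hTlen]; omega),
          List.getD_eq_getElem (P.take (k + 1)) _ (by rw [hTlen]; omega),
          List.getElem_take]
        exact (List.getD_eq_getElem P _ (by omega)).symm
      have hPz : P'.getD (k + 1) 0 = pz := by
        have h1 : (P.take (k + 1)).length ≤ k + 1 := by omega
        rw [hP'_def, List.getD_append_right _ _ _ _ h1]
        try simp [hTlen]
      have hdlt_lt : ∀ j, j < k → dlt g P' j = dlt g P j := by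
        intro j hj
        unfold dlt
        rw [hPg j (by omega), hPg (j + 1) (by omega)]
      have hdlt_k : dlt g P' k = d - 1 := by
        unfold dlt
        rw [hPz, hPg k le_rfl, ← hpk_def, ← ha_def, hpz_def]
        exact delta_add ha4.le (by omega)
      have hδ' : ∀ j, j + 1 < P'.length → 1 ≤ dlt g P' j := by
        intro j hj
        rw [hP'len] at hj
        rcases lt_or_eq_of_le (by omega : j ≤ k) with h | h
        · rw [hdlt_lt j h]
          exact hδ j (by omega)
        · rw [h, hdlt_k]
          omega
      have hinv' : ∀ j, j + 2 * g + 1 < P'.length → ∃ s, s < 2 * g ∧ dlt g P' (j + s) ≠ 1 := by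
        intro j hj
        rw [hP'len] at hj
        obtain ⟨s, hs, hne1⟩ := hinv j (by omega)
        refine ⟨s, hs, ?_⟩
        rw [hdlt_lt _ (by omega)]
        exact hne1
      obtain ⟨m, rfl⟩ : ∃ m, M = m + 1 := ⟨M - 1, by omega⟩
      have hsum1 : (∑ kk ∈ Finset.range l, (dlt g P kk - 1)) =
          (∑ kk ∈ Finset.range (k + 1), (dlt g P kk - 1)) := by
        symm
        apply Finset.sum_subset (Finset.range_subset_range.mpr (by omega))
        intro i hi hni
        rw [Finset.mem_range] at hi
        rw [Finset.mem_range] at hni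
        push_neg at hni
        rw [hkmax i (by omega) (by omega)]
        omega
      have hsum2 : (∑ kk ∈ Finset.range (k + 1), (dlt g P kk - 1)) =
          (∑ kk ∈ Finset.range k, (dlt g P kk - 1)) + (d - 1) := by
        rw [Finset.sum_range_succ, ← hd_def]
      have hsum3 : (∑ kk ∈ Finset.range (k + 1), (dlt g P' kk - 1)) =
          (∑ kk ∈ Finset.range k, (dlt g P kk - 1)) + (d - 1 - 1) := by
        rw [Finset.sum_range_succ, hdlt_k]
        congr 1
        apply Finset.sum_congr rfl
        intro i hi
        rw [Finset.mem_range] at hi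
        rw [hdlt_lt i hi]
      have hM' : (∑ kk ∈ Finset.range (P'.length - 1), (dlt g P' kk - 1)) + 1 = m := by
        rw [hP'len, show k + 2 - 1 = k + 1 from rfl, hsum3]
        omega
      have hP'bd : ∀ p ∈ P', p < 4 * g := by
        intro p hp
        rcases List.mem_append.mp hp with h | h
        · exact hbd p (List.mem_of_mem_take h)
        · rw [List.mem_singleton.mp h]
          exact hpz4
      obtain ⟨w'', hQ'', hL''⟩ := ih m (by omega) P' (by simp [hP'_def]) hP'bd hδ' hinv' hM'
      rw [hP'len] at hL''
      -- ======= the peeled polygon =======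
      set z := Fl hg pz with hz_def
      set jb := pi' (iota pz) with hjb_def
      have hGlb : Gl hg jb = Fl hg (iota pz) := by
        unfold Gl
        rw [hjb_def, pi_pi]
      set PB := iota pz :: P.drop (k + 1) with hPB_def
      have hPBlen : PB.length = t + 2 := by
        rw [hPB_def, List.length_cons, List.length_drop]
        omega
      have hPBbd : ∀ p ∈ PB, p < 4 * g := by
        intro p hp
        rcases List.mem_cons.mp hp with h | h
        · rw [h]
          exact iota_lt hpz4
        · exact hbd p (List.mem_of_mem_drop h)
      have hPBones : ∀ s, s + 1 < PB.length → dlt g PB s = 1 := by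
        intro s hs
        rw [hPBlen] at hs
        cases s with
        | zero =>
          have h1 : PB.getD (0 + 1) 0 = pk1 := by
            rw [hPB_def, List.getD_cons_succ, getD_drop, Nat.add_zero, hpk1_def]
          have h0 : PB.getD 0 0 = iota pz := by
            rw [hPB_def]
            rfl
          unfold dlt
          rw [h1, h0, iota_iota]
          apply delta_eq hpz4.le (by omega)
          have hstep : pk1 % (4 * g) = (a + d) % (4 * g) := by
            apply pos_shift ha4.le
            rw [Nat.mod_eq_of_lt hdlt4]
            exact hdcomp
          have hzp : (pz + 1) % (4 * g) = (a + d) % (4 * g) := by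
            rw [hpz_def]
            have hme := Nat.ModEq.add_right 1 (Nat.mod_modEq (a + (d - 1)) (4 * g))
            rw [show a + (d - 1) + 1 = a + d from by omega] at hme
            exact hme
          rw [hstep, hzp]
        | succ s' =>
          unfold dlt
          rw [hPB_def, List.getD_cons_succ, List.getD_cons_succ, getD_drop, getD_drop]
          have hval := hkmax (k + 1 + s') (by omega) (by omega)
          unfold dlt at hval
          rw [show k + 1 + (s' + 1) = k + 1 + s' + 1 from by omega]
          exact hval
      have hPBmap : PB.map (Fl hg) = seg (Gl hg) jb (t + 2) := by
        rw [← hPBlen]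
        exact tau_seg hg PB jb hPBbd hPBones (fun _ => by
          rw [hGlb, hPB_def]
          rfl)
      have ht4 : t + 2 ≤ 4 * g := by omega
      have hsplitB := seg_append (Gl hg) jb (t + 2) (4 * g - (t + 2))
      rw [show (t + 2) + (4 * g - (t + 2)) = 4 * g from by omega] at hsplitB
      set R := seg (Gl hg) (jb + (t + 2)) (4 * g - (t + 2)) with hR_def
      set c := FreeGroup.invRev R with hc_def
      set β := (P.drop (k + 1)).map (Fl hg) with hβ_def
      have hcons : PB.map (Fl hg) = [inv' z] ++ β := by
        rw [hPB_def, List.map_cons, hβ_def]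
        congr 1
        rw [hz_def]
        exact (inv_Fl hg pz).symm
      have hrel := relQ hg jb
      rw [hsplitB, Qm_append, ← hPBmap, hcons, Qm_append] at hrel
      -- hrel : (Qm [inv' z] * Qm β) * Qm R = 1
      have hAB : toSurfaceGroup g [inv' z] * toSurfaceGroup g β = (toSurfaceGroup g R)⁻¹ :=
        mul_eq_one_iff_eq_inv.mp hrel
      have hβeq : toSurfaceGroup g β = toSurfaceGroup g [z] * toSurfaceGroup g c := by
        have hz1 : toSurfaceGroup g [z] = (toSurfaceGroup g [inv' z])⁻¹ := by
          rw [Qm_inv_single z, inv_inv]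
        have hc1 : toSurfaceGroup g c = (toSurfaceGroup g R)⁻¹ := by
          rw [hc_def, Qm_invRev]
        rw [hz1, hc1, ← hAB]
        group
      refine ⟨w'' ++ c, ?_, ?_⟩
      · rw [Qm_append, hQ'']
        have hP'map : P'.map (Fl hg) = (P.take (k + 1)).map (Fl hg) ++ [z] := by
          rw [hP'_def, List.map_append]
          rfl
        have hPmap : P.map (Fl hg) = (P.take (k + 1)).map (Fl hg) ++ β := by
          rw [hβ_def, ← List.map_append, List.take_append_drop]
        rw [hPmap, Qm_append, hP'map, Qm_append, hβeq, mul_assoc]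
      · rw [List.length_append, hc_def, invRev_length, hR_def, seg_length]
        have e1 : (4 * g - 2) * (m + 1) = (4 * g - 2) * m + (4 * g - 2) := by ring
        rw [e1]
        obtain ⟨X, hX⟩ : ∃ X, (4 * g - 2) * m = X := ⟨_, rfl⟩
        rw [hX] at hL'' ⊢
        omega
lemma shorten (γ : List (SurfLetter g))
    (hshortest : ∀ k : ℕ, ∀ u : List (SurfLetter g),
      toSurfaceGroup g u = toSurfaceGroup g (γ.drop k ++ γ.take k) → γ.length ≤ u.length)
    (ω1 : List (SurfLetter g)) (hsub : ω1 <:+: γ)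
    (w' : List (SurfLetter g)) (hw : toSurfaceGroup g w' = toSurfaceGroup g ω1)
    (hlt : w'.length < ω1.length) : False := by
  obtain ⟨p, s, hps⟩ := hsub
  have hps' : p ++ (ω1 ++ s) = γ := by rw [← List.append_assoc]; exact hps
  have hdrop : γ.drop p.length = ω1 ++ s := by
    rw [← hps', List.drop_left]
  have htake : γ.take p.length = p := by
    rw [← hps', List.take_left]
  have h := hshortest p.length (w' ++ s ++ p) ?_
  · have hlen := congrArg List.length hps'
    simp only [List.length_append] at hlen h ⊢
    omega
  · rw [hdrop, htake, Qm_append, Qm_append, Qm_append, Qm_append, hw]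
lemma gamma_red (γ : List (SurfLetter g))
    (hshortest : ∀ k : ℕ, ∀ u : List (SurfLetter g),
      toSurfaceGroup g u = toSurfaceGroup g (γ.drop k ++ γ.take k) → γ.length ≤ u.length) :
    ∀ k, (h : k + 1 < γ.length) → γ[k + 1]'h ≠ inv' (γ[k]'(by omega)) := by
  intro k h heq
  have hd1 : γ.drop k = γ[k]'(by omega) :: γ.drop (k + 1) := List.drop_eq_getElem_cons _
  have hd2 : γ.drop (k + 1) = γ[k + 1]'h :: γ.drop (k + 2) := List.drop_eq_getElem_cons _
  have hγ : γ = γ.take k ++ ([γ[k]'(by omega)] ++ ([γ[k + 1]'h] ++ γ.drop (k + 2))) := by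
    calc γ = γ.take k ++ γ.drop k := (List.take_append_drop k γ).symm
    _ = _ := by rw [hd1, hd2]; rfl
  have hu : toSurfaceGroup g (γ.take k ++ γ.drop (k + 2)) =
      toSurfaceGroup g (γ.drop 0 ++ γ.take 0) := by
    simp only [List.drop_zero, List.take_zero, List.append_nil]
    conv_rhs => rw [hγ]
    rw [Qm_append, Qm_append, Qm_append, Qm_append, heq, Qm_inv_single]
    group
  have hlen := hshortest 0 _ hu
  simp only [List.length_append, List.length_take, List.length_drop] at hlen
  omega
lemma zip_sum (x0 : SurfLetter g) (f : SurfLetter g → SurfLetter g → ℕ) :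
    ∀ (w : List (SurfLetter g)), (List.zipWith f w w.tail).sum =
      ∑ i ∈ Finset.range (w.length - 1), f (w.getD i x0) (w.getD (i + 1) x0)
  | [] => by simp
  | [x] => by simp
  | x :: y :: w => by
    have ih := zip_sum x0 f (y :: w)
    show (f x y :: List.zipWith f (y :: w) w).sum = _
    rw [List.sum_cons]
    have htail : (y :: w : List (SurfLetter g)).tail = w := rfl
    rw [htail] at ih
    rw [ih, show (x :: y :: w : List (SurfLetter g)).length - 1 = ((y :: w : List (SurfLetter g)).length - 1) + 1 from by simp]
    rw [Finset.sum_range_succ']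
    simp only [List.getD_cons_succ, List.getD_cons_zero]
    omega
lemma getElem_mid (p mid s : List (SurfLetter g)) (i i' : ℕ) (hi : i < mid.length)
    (hii : i' = p.length + i) {H : i' < (p ++ mid ++ s).length} :
    (p ++ mid ++ s)[i'] = mid[i] := by
  subst hii
  rw [List.getElem_append_left (by simp only [List.length_append]; omega),
    List.getElem_append_right (by omega)]
  have e : p.length + i - p.length = i := by omega
  simp only [e]

lemma mapFl_posOf (hg : 1 ≤ g) (v : List (SurfLetter g)) :
    (v.map posOf).map (Fl hg) = v := by
  rw [List.map_map]
  conv_rhs => rw [← List.map_id v]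
  exact List.map_congr_left fun x _ => Fl_posOf hg x

end BS


/-- Birman–Series/Dehn bound: if `γ` is a cyclically shortest-length representative of
a non-trivial element of `Γ_g` (`g ≥ 1`) and `ω = x_0 x_1 ⋯ x_l` is a subword of `γ`,
then `|ω| ≤ (2g−1)·∑_{k=0}^{l−1} 𝔥𝔢(x_k, x_{k+1}) + 2g`. -/
theorem stmt_13 (g : ℕ) (hg : 1 ≤ g) (γ : List (SurfLetter g))
    (hnontrivial : toSurfaceGroup g γ ≠ 1)
    (hshortest : ∀ k : ℕ, ∀ u : List (SurfLetter g),
      toSurfaceGroup g u = toSurfaceGroup g (γ.drop k ++ γ.take k) → γ.length ≤ u.length)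
    (ω : List (SurfLetter g)) (hsub : ω <:+: γ) :
    ω.length ≤ (2 * g - 1) * (List.zipWith (heDist g) ω ω.tail).sum + 2 * g := by
  classical
  by_contra hcon
  push_neg at hcon
  set S := (List.zipWith (heDist g) ω ω.tail).sum with hS_def
  obtain ⟨Y, hY⟩ : ∃ Y, (2 * g - 1) * S = Y := ⟨_, rfl⟩
  rw [hY] at hcon
  have hωlen : 2 * g + 1 ≤ ω.length := by omega
  obtain ⟨p, s, hps⟩ := hsub
  subst hps
  have hred := BS.gamma_red (p ++ ω ++ s) hshortest
  have hωred : ∀ i (hi : i + 1 < ω.length), ω[i + 1]'hi ≠ BS.inv' (ω[i]'(by omega)) := by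
    intro i hi heq
    refine hred (p.length + i) (by simp only [List.length_append]; omega) ?_
    rw [BS.getElem_mid p ω s (i + 1) (p.length + i + 1) hi (by omega),
      BS.getElem_mid p ω s i (p.length + i) (by omega) rfl]
    exact heq
  set P := ω.map BS.posOf with hP_def
  have hPlen : P.length = ω.length := by simp [hP_def]
  have hPne : P ≠ [] := List.ne_nil_of_length_pos (by omega)
  have hPbd : ∀ q ∈ P, q < 4 * g := by
    intro q hq
    rw [hP_def] at hq
    obtain ⟨x, _, rfl⟩ := List.mem_map.mp hq
    exact BS.posOf_lt x
  have hPget : ∀ i (hi : i < ω.length), P.getD i 0 = BS.posOf (ω[i]'hi) := by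
    intro i hi
    rw [hP_def, List.getD_eq_getElem _ _ (by simpa using hi), List.getElem_map]
  have hdlt_eq : ∀ i (hi : i + 1 < ω.length),
      heDist g (ω[i]'(by omega)) (ω[i + 1]'hi) + 1 = BS.dlt g P i := by
    intro i hi
    rw [BS.heDist_pair hg (hωred i hi)]
    unfold BS.dlt
    rw [hPget i (by omega), hPget (i + 1) hi]
  have hδω : ∀ i, i + 1 < P.length → 1 ≤ BS.dlt g P i := by
    intro i hi
    rw [hPlen] at hi
    have := hdlt_eq i hi
    omega
  have hSsum : (∑ i ∈ Finset.range (P.length - 1), (BS.dlt g P i - 1)) = S := by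
    rw [hPlen, hS_def, BS.zip_sum (BS.Fl hg 0) (heDist g) ω]
    apply Finset.sum_congr rfl
    intro i hi
    rw [Finset.mem_range] at hi
    have hi' : i + 1 < ω.length := by omega
    rw [← hdlt_eq i hi', Nat.add_sub_cancel,
      List.getD_eq_getElem _ _ (by omega : i < ω.length),
      List.getD_eq_getElem _ _ (by omega : i + 1 < ω.length)]
  by_cases hINV : ∀ j, j + 2 * g + 1 < P.length → ∃ s', s' < 2 * g ∧ BS.dlt g P (j + s') ≠ 1
  · obtain ⟨w', hQ, hL⟩ := BS.chain_core hg (S + 1) P hPne hPbd hδω hINV (by rw [hSsum])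
    refine BS.shorten (p ++ ω ++ s) hshortest ω ⟨p, s, rfl⟩ w' ?_ ?_
    · rw [hQ, hP_def, BS.mapFl_posOf hg]
    · rw [hPlen] at hL
      have h1 : (4 * g - 2) * (S + 1) = 2 * Y + (4 * g - 2) := by
        rw [← hY]
        have h2 : 4 * g - 2 = 2 * (2 * g - 1) := by omega
        rw [h2]
        ring
      rw [h1] at hL
      omega
  · push_neg at hINV
    obtain ⟨j, hj, hones⟩ := hINV
    rw [hPlen] at hj
    set ω0 := (ω.drop j).take (2 * g + 1) with hω0_def
    have hω0len : ω0.length = 2 * g + 1 := by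
      rw [hω0_def]
      simp
      omega
    have hω0sub : ω0 <:+: (p ++ ω ++ s) :=
      (((List.take_prefix _ _).isInfix).trans ((List.drop_suffix _ _).isInfix)).trans ⟨p, s, rfl⟩
    have hω0get : ∀ i i' (hi : i < 2 * g + 1) (hii : i' = j + i) (hi' : i' < ω.length)
        (hh : i < ω0.length), ω0[i]'hh = ω[i']'hi' := by
      intro i i' hi hii hi' hh
      subst hii
      simp only [hω0_def]
      rw [List.getElem_take, List.getElem_drop]
    set P0 := ω0.map BS.posOf with hP0_def
    have hP0len : P0.length = 2 * g + 1 := by rw [hP0_def, List.length_map, hω0len]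
    have hP0get : ∀ i i' (hi : i < 2 * g + 1) (hii : i' = j + i) (hi' : i' < ω.length),
        P0.getD i 0 = BS.posOf (ω[i']'hi') := by
      intro i i' hi hii hi'
      rw [hP0_def, List.getD_eq_getElem _ _ (by rw [List.length_map, hω0len]; omega),
        List.getElem_map, hω0get i i' hi hii hi' (by rw [hω0len]; omega)]
    have hP0dlt : ∀ i, i + 1 < P0.length → BS.dlt g P0 i = 1 := by
      intro i hi
      rw [hP0len] at hi
      have h1 := hones i (by omega)
      unfold BS.dlt at h1 ⊢
      rw [hP0get i (j + i) (by omega) rfl (by omega),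
        hP0get (i + 1) (j + i + 1) (by omega) (by omega) (by omega)]
      rw [hPget (j + i) (by omega), hPget (j + i + 1) (by omega)] at h1
      exact h1
    have hδ0 : ∀ kk, kk + 1 < P0.length → 1 ≤ BS.dlt g P0 kk := fun kk h => (hP0dlt kk h).ge
    have hinv0 : ∀ j', j' + 2 * g + 1 < P0.length →
        ∃ s', s' < 2 * g ∧ BS.dlt g P0 (j' + s') ≠ 1 := by
      intro j' hj'
      rw [hP0len] at hj'
      exact absurd hj' (by omega)
    have hM0 : (∑ kk ∈ Finset.range (P0.length - 1), (BS.dlt g P0 kk - 1)) + 1 = 1 := by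
      have hz : ∀ kk ∈ Finset.range (P0.length - 1), BS.dlt g P0 kk - 1 = 0 := by
        intro kk hkk
        rw [Finset.mem_range] at hkk
        rw [hP0dlt kk (by omega)]
      rw [Finset.sum_eq_zero hz]
    have hP0ne : P0 ≠ [] := List.ne_nil_of_length_pos (by rw [hP0len]; omega)
    have hP0bd : ∀ q ∈ P0, q < 4 * g := by
      intro q hq
      rw [hP0_def] at hq
      obtain ⟨x, _, rfl⟩ := List.mem_map.mp hq
      exact BS.posOf_lt x
    obtain ⟨w0, hQ0, hL0⟩ := BS.chain_core hg 1 P0 hP0ne hP0bd hδ0 hinv0 hM0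
    refine BS.shorten (p ++ ω ++ s) hshortest ω0 hω0sub w0 ?_ ?_
    · rw [hQ0, hP0_def, BS.mapFl_posOf hg]
    · rw [hP0len] at hL0
      rw [hω0len]
      omega
end
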